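/- arXiv:2108.04707 — 5 statements merged into one kernel-verified Lean document; each statement's English description precedes it below -/
import Mathlib

section
/- Let f : B(0,r) → R be continuous with f(x*) = 0 and f(x) > 0 for all x ≠ x*, where ‖x*‖ < r, and suppose f(x) = ‖x−x*‖²_H + ‖x−x*‖^α_H · ε(x−x*) with H symmetric positive definite, α > 2, and ε bounded. Then there exist constants 0 < l ≤ L such that l·‖x−x*‖² ≤ f(x) ≤ L·‖x−x*‖² for all x ∈ B(0,r). -/
open MeasureTheory

/-- The squared `H`-norm `yᵀ H y`. -/
noncomputable def Hquad {d : ℕ} (H : Matrix (Fin d) (Fin d) ℝ)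
    (y : EuclideanSpace ℝ (Fin d)) : ℝ :=
  dotProduct (y : Fin d → ℝ) (H.mulVec (y : Fin d → ℝ))

/-- The `H`-norm `‖y‖_H = √(yᵀ H y)`. -/
noncomputable def Hnorm {d : ℕ} (H : Matrix (Fin d) (Fin d) ℝ)
    (y : EuclideanSpace ℝ (Fin d)) : ℝ :=
  Real.sqrt (Hquad H y)

/-- The main assumption (Assumption 1 of the paper). -/
structure Assump (d : ℕ) (r : ℝ) (f : EuclideanSpace ℝ (Fin d) → ℝ)
    (xstar : EuclideanSpace ℝ (Fin d)) (H : Matrix (Fin d) (Fin d) ℝ)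
    (α : ℝ) (ε : EuclideanSpace ℝ (Fin d) → ℝ) (M : ℝ) : Prop where
  cont : ContinuousOn f (Metric.closedBall 0 r)
  opt_int : ‖xstar‖ < r
  fopt : f xstar = 0
  fpos : ∀ x ∈ Metric.closedBall (0 : EuclideanSpace ℝ (Fin d)) r, x ≠ xstar → 0 < f x
  symm : H.IsSymm
  posdef : H.PosDef
  alpha_gt : 2 < α
  M_pos : 0 < M
  eps_bdd : ∀ x, |ε x| ≤ M
  feq : ∀ x ∈ Metric.closedBall (0 : EuclideanSpace ℝ (Fin d)) r,
    f x = Hnorm H (x - xstar) ^ 2 + Hnorm H (x - xstar) ^ α * ε (x - xstar)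

lemma Hquad_smul {d : ℕ} (H : Matrix (Fin d) (Fin d) ℝ) (c : ℝ)
    (y : EuclideanSpace ℝ (Fin d)) : Hquad H (c • y) = c ^ 2 * Hquad H y := by
  have h : ((c • y : EuclideanSpace ℝ (Fin d)) : Fin d → ℝ) = c • (y : Fin d → ℝ) := rfl
  unfold Hquad
  rw [h, Matrix.mulVec_smul, smul_dotProduct, dotProduct_smul, smul_eq_mul,
    smul_eq_mul]
  ring

lemma Hquad_continuous {d : ℕ} (H : Matrix (Fin d) (Fin d) ℝ) :
    Continuous (Hquad H) := by
  unfold Hquad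
  exact (continuous_id.dotProduct (continuous_const.matrix_mulVec continuous_id)).comp
    (EuclideanSpace.equiv (Fin d) ℝ).continuous

lemma Hquad_pos {d : ℕ} {H : Matrix (Fin d) (Fin d) ℝ} (h : H.PosDef)
    {y : EuclideanSpace ℝ (Fin d)} (hy : y ≠ 0) : 0 < Hquad H y := by
  have := h.dotProduct_mulVec_pos (x := (y : Fin d → ℝ)) (by exact fun h' => hy (by ext i; exact congrFun h' i))
  simpa [Hquad] using this

lemma Hquad_zero {d : ℕ} (H : Matrix (Fin d) (Fin d) ℝ) :
    Hquad H (0 : EuclideanSpace ℝ (Fin d)) = 0 := by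
  have := Hquad_smul H 0 (0 : EuclideanSpace ℝ (Fin d))
  simpa using this

/-- Lemma 3.1: under the main assumption, `f` is sandwiched between two
spherical quadratic functions. -/
theorem exists_sandwich_constants
    {d : ℕ} {r : ℝ} {f : EuclideanSpace ℝ (Fin d) → ℝ}
    {xstar : EuclideanSpace ℝ (Fin d)} {H : Matrix (Fin d) (Fin d) ℝ}
    {α : ℝ} {ε : EuclideanSpace ℝ (Fin d) → ℝ} {M : ℝ}
    (hf : Assump d r f xstar H α ε M) :
    ∃ l L : ℝ, 0 < l ∧ l ≤ L ∧
      ∀ x ∈ Metric.closedBall (0 : EuclideanSpace ℝ (Fin d)) r,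
        l * ‖x - xstar‖ ^ 2 ≤ f x ∧ f x ≤ L * ‖x - xstar‖ ^ 2 := by
  classical
  have hM := hf.M_pos
  have hr : 0 < r := lt_of_le_of_lt (norm_nonneg xstar) hf.opt_int
  have hα2 : (0:ℝ) < α - 2 := by linarith [hf.alpha_gt]
  have hαne : α ≠ 0 := by linarith [hf.alpha_gt]
  -- trivial case: the space is trivial (d = 0)
  by_cases h0 : (Metric.sphere (0 : EuclideanSpace ℝ (Fin d)) 1).Nonempty
  swap
  · -- every vector is zero
    have hz : ∀ y : EuclideanSpace ℝ (Fin d), y = 0 := by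
      intro y
      by_contra hy
      exact h0 ⟨‖y‖⁻¹ • y, by
        simp only [mem_sphere_zero_iff_norm]
        exact norm_smul_inv_norm (𝕜 := ℝ) hy⟩
    refine ⟨1, 1, one_pos, le_refl _, fun x hx => ?_⟩
    have hxy : x - xstar = 0 := hz _
    have hH0 : Hnorm H (x - xstar) = 0 := by
      rw [hxy]; simp [Hnorm, Hquad_zero]
    have hfx := hf.feq x hx
    rw [hH0] at hfx
    rw [hfx, hxy, Real.zero_rpow hαne]
    norm_num
  -- nontrivial case
  obtain ⟨yμ, hyμS, hyμ'⟩ := (isCompact_sphere (0:EuclideanSpace ℝ (Fin d)) 1).exists_isMinOn h0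
    (Hquad_continuous H).continuousOn
  obtain ⟨yΛ, hyΛS, hyΛ'⟩ := (isCompact_sphere (0:EuclideanSpace ℝ (Fin d)) 1).exists_isMaxOn h0
    (Hquad_continuous H).continuousOn
  have hyμ : ∀ y ∈ Metric.sphere (0:EuclideanSpace ℝ (Fin d)) 1, Hquad H yμ ≤ Hquad H y :=
    fun y hy => hyμ' hy
  have hyΛ : ∀ y ∈ Metric.sphere (0:EuclideanSpace ℝ (Fin d)) 1, Hquad H y ≤ Hquad H yΛ :=
    fun y hy => hyΛ' hy
  set μ := Hquad H yμ with hμdef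
  set Λ := Hquad H yΛ with hΛdef
  have hyμn : ‖yμ‖ = 1 := mem_sphere_zero_iff_norm.1 hyμS
  have hμpos : 0 < μ := Hquad_pos hf.posdef (by intro h; rw [h] at hyμn; simp at hyμn)
  have hμΛ : μ ≤ Λ := hyμ yΛ hyΛS
  have hΛpos : 0 < Λ := lt_of_lt_of_le hμpos hμΛ
  -- the key two-sided quadratic bound
  have key : ∀ y : EuclideanSpace ℝ (Fin d),
      μ * ‖y‖ ^ 2 ≤ Hquad H y ∧ Hquad H y ≤ Λ * ‖y‖ ^ 2 := by
    intro y
    rcases eq_or_ne y 0 with h | h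
    · simp [h, Hquad_zero]
    · set u : EuclideanSpace ℝ (Fin d) := ‖y‖⁻¹ • y with hu
      have hun : u ∈ Metric.sphere (0:EuclideanSpace ℝ (Fin d)) 1 := by
        simp only [mem_sphere_zero_iff_norm]
        exact norm_smul_inv_norm (𝕜 := ℝ) h
      have hyn : 0 < ‖y‖ := norm_pos_iff.2 h
      have hqu : Hquad H u = (‖y‖⁻¹) ^ 2 * Hquad H y := Hquad_smul H _ y
      have h1 : μ ≤ Hquad H u := hyμ u hun
      have h2 : Hquad H u ≤ Λ := hyΛ u hun
      rw [hqu] at h1 h2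
      constructor
      · have h3 := mul_le_mul_of_nonneg_left h1 (le_of_lt (pow_pos hyn 2))
        calc μ * ‖y‖ ^ 2 = ‖y‖ ^ 2 * μ := by ring
        _ ≤ ‖y‖ ^ 2 * ((‖y‖⁻¹) ^ 2 * Hquad H y) := h3
        _ = Hquad H y := by field_simp
      · have h3 := mul_le_mul_of_nonneg_left h2 (le_of_lt (pow_pos hyn 2))
        calc Hquad H y = ‖y‖ ^ 2 * ((‖y‖⁻¹) ^ 2 * Hquad H y) := by field_simp
        _ ≤ ‖y‖ ^ 2 * Λ := h3
        _ = Λ * ‖y‖ ^ 2 := by ring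
  have hqnn : ∀ y : EuclideanSpace ℝ (Fin d), 0 ≤ Hquad H y := fun y =>
    le_trans (by positivity) (key y).1
  have hnsq : ∀ y : EuclideanSpace ℝ (Fin d), Hnorm H y ^ 2 = Hquad H y := fun y =>
    Real.sq_sqrt (hqnn y)
  have hnnn : ∀ y : EuclideanSpace ℝ (Fin d), 0 ≤ Hnorm H y := fun y => Real.sqrt_nonneg _
  have hnle : ∀ y : EuclideanSpace ℝ (Fin d), Hnorm H y ≤ Real.sqrt Λ * ‖y‖ := by
    intro y
    calc Hnorm H y ≤ Real.sqrt (Λ * ‖y‖ ^ 2) := Real.sqrt_le_sqrt (key y).2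
    _ = Real.sqrt Λ * ‖y‖ := by
        rw [Real.sqrt_mul (le_of_lt hΛpos), Real.sqrt_sq (norm_nonneg y)]
  have hsplit : ∀ y : EuclideanSpace ℝ (Fin d),
      Hnorm H y ^ α = Hnorm H y ^ 2 * Hnorm H y ^ (α - 2) := by
    intro y
    have h2 : (2:ℝ) + (α - 2) = α := by ring
    have h3 := Real.rpow_add' (hnnn y) (by rw [h2]; exact hαne)
    rw [h2] at h3
    rw [h3, ← Real.rpow_natCast (Hnorm H y) 2]
    norm_num
  set R := r + ‖xstar‖ with hR
  have hRpos : 0 < R := by positivity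
  have hyR : ∀ x ∈ Metric.closedBall (0:EuclideanSpace ℝ (Fin d)) r, ‖x - xstar‖ ≤ R := by
    intro x hx
    have hx' : ‖x‖ ≤ r := mem_closedBall_zero_iff.1 hx
    calc ‖x - xstar‖ ≤ ‖x‖ + ‖xstar‖ := norm_sub_le x xstar
    _ ≤ R := by rw [hR]; linarith
  -- upper-bound constant
  set C := (Real.sqrt Λ * R) ^ (α - 2) with hC
  have hCnn : 0 ≤ C := Real.rpow_nonneg (by positivity) _
  set L := Λ * (1 + M * C) with hL
  have hLpos : 0 < L := by
    have hMC : 0 ≤ M * C := by positivity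
    rw [hL]; nlinarith
  have upper : ∀ x ∈ Metric.closedBall (0:EuclideanSpace ℝ (Fin d)) r,
      f x ≤ L * ‖x - xstar‖ ^ 2 := by
    intro x hx
    set y := x - xstar with hy
    have hq2 : Hquad H y ≤ Λ * ‖y‖ ^ 2 := (key y).2
    have hεb : ε y ≤ M := (abs_le.1 (hf.eps_bdd y)).2
    have hnRb : Hnorm H y ≤ Real.sqrt Λ * R :=
      le_trans (hnle y) (by
        have h1 := hyR x hx
        have h2 : 0 ≤ Real.sqrt Λ := Real.sqrt_nonneg _
        nlinarith)
    have hpow : Hnorm H y ^ (α - 2) ≤ C :=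
      Real.rpow_le_rpow (hnnn y) hnRb (le_of_lt hα2)
    have hαε : Hnorm H y ^ α * ε y ≤ Hnorm H y ^ 2 * C * M := by
      rw [hsplit y]
      have hnn : 0 ≤ Hnorm H y ^ 2 := sq_nonneg _
      have hnn2 : 0 ≤ Hnorm H y ^ (α - 2) := Real.rpow_nonneg (hnnn y) _
      calc Hnorm H y ^ 2 * Hnorm H y ^ (α - 2) * ε y
          ≤ Hnorm H y ^ 2 * Hnorm H y ^ (α - 2) * M := by
            apply mul_le_mul_of_nonneg_left hεb (by positivity)
      _ ≤ Hnorm H y ^ 2 * C * M := by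
            apply mul_le_mul_of_nonneg_right _ (le_of_lt hM)
            exact mul_le_mul_of_nonneg_left hpow hnn
    rw [hf.feq x hx, ← hy]
    have hn2 := hnsq y
    rw [hL]
    nlinarith [sq_nonneg (Hnorm H y)]
  -- lower bound: radius δ around xstar
  set t0 := ((2 * M)⁻¹) ^ ((α - 2)⁻¹) with ht0
  have ht0pos : 0 < t0 := Real.rpow_pos_of_pos (by positivity) _
  set δ := t0 / Real.sqrt Λ with hδ
  have hδpos : 0 < δ := div_pos ht0pos (Real.sqrt_pos.2 hΛpos)
  have lower_near : ∀ x ∈ Metric.closedBall (0:EuclideanSpace ℝ (Fin d)) r, ‖x - xstar‖ ≤ δ →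
      μ / 2 * ‖x - xstar‖ ^ 2 ≤ f x := by
    intro x hx hxδ
    set y := x - xstar with hy
    have hq1 : μ * ‖y‖ ^ 2 ≤ Hquad H y := (key y).1
    have hεb : -M ≤ ε y := (abs_le.1 (hf.eps_bdd y)).1
    have hnb : Hnorm H y ≤ t0 := by
      have h1 := hnle y
      have h2 : Real.sqrt Λ * ‖y‖ ≤ Real.sqrt Λ * δ :=
        mul_le_mul_of_nonneg_left hxδ (Real.sqrt_nonneg _)
      have h3 : Real.sqrt Λ * δ = t0 := by
        rw [hδ]
        field_simp
      linarith
    have hpow : Hnorm H y ^ (α - 2) ≤ (2 * M)⁻¹ := by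
      have h4 := Real.rpow_le_rpow (hnnn y) hnb (le_of_lt hα2)
      rwa [ht0, Real.rpow_inv_rpow (by positivity) (ne_of_gt hα2)] at h4
    have hkey : Hnorm H y ^ α * ε y ≥ -(Hnorm H y ^ 2 / 2) := by
      rw [hsplit y]
      have hnn : 0 ≤ Hnorm H y ^ 2 := sq_nonneg _
      have hnn2 : 0 ≤ Hnorm H y ^ (α - 2) := Real.rpow_nonneg (hnnn y) _
      have e1 : Hnorm H y ^ 2 * Hnorm H y ^ (α - 2) * (-M)
          ≤ Hnorm H y ^ 2 * Hnorm H y ^ (α - 2) * ε y :=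
        mul_le_mul_of_nonneg_left hεb (mul_nonneg hnn hnn2)
      have e2 : Hnorm H y ^ 2 * Hnorm H y ^ (α - 2) * M
          ≤ Hnorm H y ^ 2 * (2 * M)⁻¹ * M :=
        mul_le_mul_of_nonneg_right (mul_le_mul_of_nonneg_left hpow hnn) (le_of_lt hM)
      have e3 : Hnorm H y ^ 2 * (2 * M)⁻¹ * M = Hnorm H y ^ 2 / 2 := by
        field_simp
      linarith
    rw [hf.feq x hx, ← hy]
    have hn2 := hnsq y
    linarith
  -- lower bound away from xstar
  set K := Metric.closedBall (0:EuclideanSpace ℝ (Fin d)) r ∩ {x | δ ≤ ‖x - xstar‖} with hK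
  have hKcpt : IsCompact K :=
    (isCompact_closedBall (0:EuclideanSpace ℝ (Fin d)) r).inter_right
      (isClosed_le continuous_const ((continuous_id.sub continuous_const).norm))
  by_cases hKne : K.Nonempty
  · obtain ⟨x0, hx0K, hx0min'⟩ := hKcpt.exists_isMinOn hKne
      (hf.cont.mono Set.inter_subset_left)
    have hx0min : ∀ x ∈ K, f x0 ≤ f x := fun x hx => hx0min' hx
    have hx0ne : x0 ≠ xstar := by
      intro h
      have h5 := hx0K.2
      rw [h] at h5
      simp only [Set.mem_setOf_eq, sub_self, norm_zero] at h5
      linarith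
    set m := f x0 with hm
    have hmpos : 0 < m := hf.fpos x0 hx0K.1 hx0ne
    refine ⟨min (μ / 2) (m / R ^ 2), L, ?_, ?_, ?_⟩
    · exact lt_min (by linarith) (by positivity)
    · refine le_trans (min_le_left _ _) ?_
      rw [hL]
      nlinarith [mul_nonneg (le_of_lt hM) hCnn]
    · intro x hx
      refine ⟨?_, upper x hx⟩
      rcases le_or_gt ‖x - xstar‖ δ with hcase | hcase
      · calc min (μ / 2) (m / R ^ 2) * ‖x - xstar‖ ^ 2
            ≤ μ / 2 * ‖x - xstar‖ ^ 2 :=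
              mul_le_mul_of_nonneg_right (min_le_left _ _) (sq_nonneg _)
        _ ≤ f x := lower_near x hx hcase
      · have hxK : x ∈ K := ⟨hx, le_of_lt hcase⟩
        calc min (μ / 2) (m / R ^ 2) * ‖x - xstar‖ ^ 2
            ≤ m / R ^ 2 * ‖x - xstar‖ ^ 2 :=
              mul_le_mul_of_nonneg_right (min_le_right _ _) (sq_nonneg _)
        _ ≤ m / R ^ 2 * R ^ 2 := by
              apply mul_le_mul_of_nonneg_left _ (by positivity)
              have h6 := hyR x hx
              nlinarith [norm_nonneg (x - xstar)]
        _ = m := by field_simp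
        _ ≤ f x := hx0min x hxK
  · refine ⟨μ / 2, L, by linarith, ?_, ?_⟩
    · rw [hL]
      nlinarith [mul_nonneg (le_of_lt hM) hCnn]
    · intro x hx
      refine ⟨?_, upper x hx⟩
      have hxδ : ‖x - xstar‖ ≤ δ := by
        by_contra h
        exact hKne ⟨x, hx, le_of_lt (lt_of_not_ge h)⟩
      exact lower_near x hx hxδ
end

section
/- Let M > 0 and α > 2, and let φ₋ be the inverse of g(u) = u² + M·u^α on [0,∞). Then φ₋(h) = √h − (M/2)·h^((α−1)/2) + o(h^((α−1)/2)) as h → 0⁺. -/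
open Set Filter Asymptotics

/-- the inverse `φ₋` of `g u = u² + M u^α` on `[0,∞)` satisfies
`φ₋(h) = √h − (M/2) h^((α−1)/2) + o(h^((α−1)/2))` as `h → 0⁺`. -/
theorem phi_minus_asymptotics (M α : ℝ) (hM : 0 < M) (hα : 2 < α)
    (φ : ℝ → ℝ)
    (hφ : ∀ h : ℝ, 0 ≤ h → 0 ≤ φ h ∧ (φ h) ^ 2 + M * (φ h) ^ α = h) :
    (fun h : ℝ => φ h - (Real.sqrt h - M / 2 * h ^ ((α - 1) / 2)))
      =o[nhdsWithin 0 (Ioi 0)] (fun h : ℝ => h ^ ((α - 1) / 2)) := by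
  set l := nhdsWithin (0:ℝ) (Ioi 0) with hl
  have hmem : ∀ᶠ h in l, (0:ℝ) < h := eventually_mem_nhdsWithin
  have hα0 : (0:ℝ) ≤ α := by linarith
  -- basic properties of φ on (0, ∞)
  have key : ∀ h : ℝ, 0 < h → 0 ≤ φ h ∧ φ h ≤ Real.sqrt h
      ∧ (φ h) ^ 2 + M * (φ h) ^ α = h := by
    intro h hh
    obtain ⟨h1, h2⟩ := hφ h hh.le
    have hsq : (φ h) ^ 2 ≤ h := by
      nlinarith [Real.rpow_nonneg h1 α]
    exact ⟨h1, (Real.le_sqrt h1 hh.le).mpr hsq, h2⟩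
  -- limit of h ^ (α/2 - 1) at 0⁺
  have hc : (0:ℝ) < α / 2 - 1 := by linarith
  have hpow0 : Tendsto (fun h : ℝ => h ^ (α / 2 - 1)) l (nhds 0) := by
    have := (Real.continuousAt_rpow_const 0 (α / 2 - 1) (Or.inr hc.le)).tendsto
    rw [Real.zero_rpow hc.ne'] at this
    exact this.mono_left nhdsWithin_le_nhds
  -- M φ(h)^α / h → 0
  have hA : Tendsto (fun h : ℝ => M * (φ h) ^ α / h) l (nhds 0) := by
    apply squeeze_zero' (g := fun h : ℝ => M * h ^ (α / 2 - 1))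
    · filter_upwards [hmem] with h hh
      obtain ⟨h1, _, _⟩ := key h hh
      positivity
    · filter_upwards [hmem] with h hh
      obtain ⟨h1, h2, _⟩ := key h hh
      have hbound : (φ h) ^ α ≤ h ^ (α / 2) := by
        calc (φ h) ^ α ≤ (Real.sqrt h) ^ α := Real.rpow_le_rpow h1 h2 hα0
        _ = h ^ (α / 2) := by
            rw [Real.sqrt_eq_rpow, ← Real.rpow_mul hh.le]
            congr 1
            ring
      calc M * (φ h) ^ α / h ≤ M * h ^ (α / 2) / h := by
            gcongr
        _ = M * h ^ (α / 2 - 1) := by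
            rw [Real.rpow_sub hh, Real.rpow_one]; ring
    · have := hpow0.const_mul M
      simpa using this
  -- r h := φ h / √h tends to 1
  have hr : Tendsto (fun h : ℝ => φ h / Real.sqrt h) l (nhds 1) := by
    have h1 : Tendsto (fun h : ℝ => (φ h) ^ 2 / h) l (nhds 1) := by
      have := (tendsto_const_nhds (x := (1:ℝ)) (f := l)).sub hA
      rw [sub_zero] at this
      refine this.congr' ?_
      filter_upwards [hmem] with h hh
      obtain ⟨_, _, h3⟩ := key h hh
      field_simp
      linarith
    have h2 : Tendsto (fun h : ℝ => Real.sqrt ((φ h) ^ 2 / h)) l (nhds 1) := by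
      simpa using h1.sqrt
    refine h2.congr' ?_
    filter_upwards [hmem] with h hh
    obtain ⟨hφ0, _, _⟩ := key h hh
    rw [Real.sqrt_div (by positivity), Real.sqrt_sq hφ0]
  -- the limit of the ratio expression
  have hlim : Tendsto (fun h : ℝ =>
      M / 2 - M * (φ h / Real.sqrt h) ^ α / (φ h / Real.sqrt h + 1)) l (nhds 0) := by
    have h1 : Tendsto (fun h : ℝ => (φ h / Real.sqrt h) ^ α) l (nhds 1) := by
      have := hr.rpow_const (p := α) (Or.inl one_ne_zero)
      simpa using this
    have h2 : Tendsto (fun h : ℝ => φ h / Real.sqrt h + 1) l (nhds 2) := by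
      have := hr.add (tendsto_const_nhds (x := (1:ℝ)))
      norm_num at this
      exact this
    have h3 := ((h1.const_mul M).div h2 (by norm_num))
    have h4 := (tendsto_const_nhds (x := M / 2) (f := l)).sub h3
    have : M / 2 - M * 1 / 2 = 0 := by ring
    rwa [this] at h4
  -- conclude via the ratio characterization of little-o
  rw [isLittleO_iff_tendsto']
  · refine hlim.congr' ?_
    filter_upwards [hmem] with h hh
    obtain ⟨hφ0, hφs, heq⟩ := key h hh
    have hs : 0 < Real.sqrt h := Real.sqrt_pos.mpr hh
    have hp : 0 < h ^ ((α - 1) / 2) := Real.rpow_pos_of_pos hh _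
    have hus : 0 < φ h + Real.sqrt h := by positivity
    -- key rpow identities
    have hsα : (Real.sqrt h) ^ α = h ^ ((α - 1) / 2) * Real.sqrt h := by
      rw [Real.sqrt_eq_rpow, ← Real.rpow_mul hh.le, ← Real.rpow_add hh]
      ring_nf
    have hdiv : (φ h / Real.sqrt h) ^ α = (φ h) ^ α / (Real.sqrt h) ^ α :=
      Real.div_rpow hφ0 (Real.sqrt_nonneg h) α
    have hsq2 : Real.sqrt h * Real.sqrt h = h := Real.mul_self_sqrt hh.le
    rw [hdiv, hsα]
    have hu2 : (φ h) ^ 2 = Real.sqrt h * Real.sqrt h - M * (φ h) ^ α := by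
      rw [hsq2]; linarith
    field_simp
    linear_combination (-2) * hu2
  · filter_upwards [hmem] with h hh hzero
    exact absurd hzero (Real.rpow_pos_of_pos hh _).ne'
end

section
/- Let m > 0 and α > 2, and let φ₊ be the inverse of g(u) = u² − m·u^α restricted to [0, r₀] where r₀ = (2/(α m))^{1/(α−2)}. Then φ₊(h) = √h + (m/2)·h^((α−1)/2) + o(h^((α−1)/2)) as h → 0⁺. -/
open Set Filter Asymptotics

/-- the increasing-branch inverse `φ₊` of `g u = u² − m u^α` on `[0, r₀]`,
`r₀ = (2/(α m))^(1/(α−2))`, satisfies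
`φ₊(h) = √h + (m/2) h^((α−1)/2) + o(h^((α−1)/2))` as `h → 0⁺`. -/
theorem phi_plus_asymptotics (m α : ℝ) (hm : 0 < m) (hα : 2 < α)
    (r₀ : ℝ) (hr₀ : r₀ = (2 / (α * m)) ^ (1 / (α - 2)))
    (φ : ℝ → ℝ)
    (hφ : ∀ h ∈ Icc (0 : ℝ) (r₀ ^ 2 - m * r₀ ^ α),
      φ h ∈ Icc 0 r₀ ∧ (φ h) ^ 2 - m * (φ h) ^ α = h) :
    (fun h : ℝ => φ h - (Real.sqrt h + m / 2 * h ^ ((α - 1) / 2)))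
      =o[nhdsWithin 0 (Ioi 0)] (fun h : ℝ => h ^ ((α - 1) / 2)) := by
  have hα0 : (0:ℝ) < α := by linarith
  have hα2 : (0:ℝ) < α - 2 := by linarith
  have hbase : (0:ℝ) < 2 / (α * m) := by positivity
  have hr₀pos : 0 < r₀ := by rw [hr₀]; positivity
  have hr₀pow : r₀ ^ (α - 2) = 2 / (α * m) := by
    rw [hr₀, ← Real.rpow_mul hbase.le, one_div,
      inv_mul_cancel₀ (ne_of_gt hα2), Real.rpow_one]
  have hr₀α : m * r₀ ^ α = 2 / α * r₀ ^ 2 := by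
    have h1 : r₀ ^ α = r₀ ^ (α - 2) * r₀ ^ (2:ℕ) := by
      rw [← Real.rpow_natCast r₀ 2, ← Real.rpow_add hr₀pos]
      norm_num
    rw [h1, hr₀pow]
    field_simp
  set H := r₀ ^ 2 - m * r₀ ^ α with hH
  have hHpos : 0 < H := by
    rw [hH, hr₀α]
    have h1 : 0 < r₀ ^ 2 := by positivity
    have h2α : 2 / α < 1 := by rw [div_lt_one hα0]; linarith
    nlinarith
  have hE : Ioc (0:ℝ) H ∈ nhdsWithin (0:ℝ) (Ioi 0) :=
    Ioc_mem_nhdsGT_of_mem ⟨le_refl _, hHpos⟩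
  set K := α / (α - 2) with hKdef
  have hKpos : 0 < K := by positivity
  -- pointwise facts
  have key : ∀ h ∈ Ioc (0:ℝ) H,
      0 < φ h ∧ φ h ^ 2 = h + m * φ h ^ α ∧ φ h ^ 2 ≤ K * h := by
    intro h hh
    obtain ⟨huIcc, heq⟩ := hφ h ⟨hh.1.le, hh.2⟩
    have hu0 : 0 ≤ φ h := huIcc.1
    have hnn : 0 ≤ m * φ h ^ α := by positivity
    have hsq : φ h ^ 2 = h + m * φ h ^ α := by linarith
    have hupos : 0 < φ h := by
      rcases hu0.lt_or_eq with h' | h'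
      · exact h'
      · exfalso
        rw [← h', Real.zero_rpow (ne_of_gt hα0)] at hsq
        simp at hsq
        linarith [hh.1]
    have hle : m * φ h ^ α ≤ 2 / α * φ h ^ 2 := by
      have h1 : φ h ^ α = φ h ^ (α - 2) * φ h ^ (2:ℕ) := by
        rw [← Real.rpow_natCast (φ h) 2, ← Real.rpow_add hupos]
        norm_num
      have h2 : φ h ^ (α - 2) ≤ r₀ ^ (α - 2) :=
        Real.rpow_le_rpow hu0 huIcc.2 hα2.le
      rw [h1, hr₀pow] at *
      have h3 : 0 ≤ φ h ^ (2:ℕ) := by positivity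
      calc m * (φ h ^ (α - 2) * φ h ^ (2:ℕ))
          ≤ m * (2 / (α * m) * φ h ^ (2:ℕ)) := by
            apply mul_le_mul_of_nonneg_left _ hm.le
            exact mul_le_mul_of_nonneg_right h2 h3
        _ = 2 / α * φ h ^ (2:ℕ) := by field_simp
    refine ⟨hupos, hsq, ?_⟩
    rw [hKdef]
    rw [div_mul_eq_mul_div, le_div_iff₀ hα2]
    have hle' : α * (m * φ h ^ α) ≤ 2 * φ h ^ 2 := by
      calc α * (m * φ h ^ α) ≤ α * (2 / α * φ h ^ 2) :=
            mul_le_mul_of_nonneg_left hle hα0.le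
        _ = 2 * φ h ^ 2 := by field_simp
    nlinarith [hle', hsq, hh.1, hα0]
  -- the normalized function r h = φ h / √h tends to 1
  have hsqbd : ∀ h ∈ Ioc (0:ℝ) H,
      1 ≤ (φ h / Real.sqrt h) ^ 2 ∧
      (φ h / Real.sqrt h) ^ 2 ≤ 1 + m * K ^ (α/2) * h ^ ((α-2)/2) := by
    intro h hh
    obtain ⟨hup, hsq, hub⟩ := key h hh
    have hhpos : 0 < h := hh.1
    have hs2 : Real.sqrt h ^ 2 = h := Real.sq_sqrt hhpos.le
    have hspos : 0 < Real.sqrt h := Real.sqrt_pos.2 hhpos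
    have hdiv : (φ h / Real.sqrt h) ^ 2 = 1 + m * φ h ^ α / h := by
      rw [div_pow, hs2, hsq]
      field_simp
    constructor
    · rw [hdiv]
      have : 0 ≤ m * φ h ^ α / h := by positivity
      linarith
    · rw [hdiv]
      have hαbd : φ h ^ α ≤ K ^ (α/2) * h ^ (α/2) := by
        have h1 : φ h ^ α = (φ h ^ (2:ℕ)) ^ (α/2) := by
          rw [← Real.rpow_natCast (φ h) 2, ← Real.rpow_mul hup.le]
          congr 1
          push_cast
          ring
        rw [h1, ← Real.mul_rpow hKpos.le hhpos.le]
        exact Real.rpow_le_rpow (by positivity) hub (by positivity)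
      have hpow : h ^ (α/2) = h ^ ((α-2)/2) * h := by
        rw [show (α:ℝ)/2 = (α-2)/2 + 1 by ring, Real.rpow_add hhpos, Real.rpow_one]
      have : m * φ h ^ α / h ≤ m * K ^ (α/2) * h ^ ((α-2)/2) := by
        rw [div_le_iff₀ hhpos]
        calc m * φ h ^ α ≤ m * (K ^ (α/2) * h ^ (α/2)) :=
              mul_le_mul_of_nonneg_left hαbd hm.le
          _ = m * K ^ (α/2) * h ^ ((α-2)/2) * h := by rw [hpow]; ring
      linarith
  have hsq_tendsto : Tendsto (fun h => (φ h / Real.sqrt h) ^ 2)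
      (nhdsWithin 0 (Ioi 0)) (nhds 1) := by
    have hb : Tendsto (fun h : ℝ => 1 + m * K ^ (α/2) * h ^ ((α-2)/2))
        (nhdsWithin 0 (Ioi 0)) (nhds 1) := by
      have h0 : Tendsto (fun h : ℝ => h ^ ((α-2)/2)) (nhdsWithin 0 (Ioi 0)) (nhds 0) := by
        have hc : ContinuousAt (fun x : ℝ => x ^ ((α-2)/2)) 0 :=
          Real.continuousAt_rpow_const 0 _ (Or.inr (by positivity))
        have h2 : Tendsto (fun x : ℝ => x ^ ((α-2)/2)) (nhdsWithin 0 (Ioi 0)) (nhds (0 ^ ((α-2)/2))) :=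
          hc.tendsto.mono_left nhdsWithin_le_nhds
        rwa [Real.zero_rpow (by positivity : ((α-2)/2 : ℝ) ≠ 0)] at h2
      have : Tendsto (fun h : ℝ => 1 + m * K ^ (α/2) * h ^ ((α-2)/2))
          (nhdsWithin 0 (Ioi 0)) (nhds (1 + m * K ^ (α/2) * 0)) :=
        tendsto_const_nhds.add (tendsto_const_nhds.mul h0)
      simpa using this
    refine tendsto_of_tendsto_of_tendsto_of_le_of_le' tendsto_const_nhds hb ?_ ?_
    · filter_upwards [hE] with h hh using (hsqbd h hh).1
    · filter_upwards [hE] with h hh using (hsqbd h hh).2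
  have hr1 : Tendsto (fun h => φ h / Real.sqrt h) (nhdsWithin 0 (Ioi 0)) (nhds 1) := by
    have h1 : Tendsto (fun h => Real.sqrt ((φ h / Real.sqrt h) ^ 2))
        (nhdsWithin 0 (Ioi 0)) (nhds 1) := by
      have := (Real.continuous_sqrt.tendsto 1).comp hsq_tendsto
      simpa [Function.comp_def] using this
    apply h1.congr'
    filter_upwards [hE] with h hh
    have hup := (key h hh).1
    exact Real.sqrt_sq (div_nonneg hup.le (Real.sqrt_nonneg h))
  -- conclusion
  rw [isLittleO_iff_tendsto']
  · have hF : Tendsto (fun h => m * ((φ h / Real.sqrt h) ^ α / (φ h / Real.sqrt h + 1) - 1/2))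
        (nhdsWithin 0 (Ioi 0)) (nhds 0) := by
      have hnum : Tendsto (fun h => (φ h / Real.sqrt h) ^ α) (nhdsWithin 0 (Ioi 0))
          (nhds 1) := by
        have hc : ContinuousAt (fun x : ℝ => x ^ α) 1 :=
          Real.continuousAt_rpow_const 1 α (Or.inl one_ne_zero)
        have := hc.tendsto.comp hr1
        simpa [Real.one_rpow, Function.comp_def] using this
      have hden : Tendsto (fun h => φ h / Real.sqrt h + 1) (nhdsWithin 0 (Ioi 0))
          (nhds 2) := by
        have := hr1.add (tendsto_const_nhds (x := (1:ℝ)))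
        norm_num at this
        exact this
      have hq : Tendsto (fun h => (φ h / Real.sqrt h) ^ α / (φ h / Real.sqrt h + 1))
          (nhdsWithin 0 (Ioi 0)) (nhds (1/2)) := hnum.div hden two_ne_zero
      have := (tendsto_const_nhds (x := m)).mul (hq.sub (tendsto_const_nhds (x := (1/2:ℝ))))
      norm_num at this
      simpa using this
    apply hF.congr'
    filter_upwards [hE] with h hh
    obtain ⟨hup, hsq, _⟩ := key h hh
    have hhpos : 0 < h := hh.1
    have hspos : 0 < Real.sqrt h := Real.sqrt_pos.2 hhpos
    have hs2 : Real.sqrt h ^ 2 = h := Real.sq_sqrt hhpos.le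
    have hppos : 0 < h ^ ((α-1)/2) := Real.rpow_pos_of_pos hhpos _
    have hsα : Real.sqrt h ^ α = Real.sqrt h * h ^ ((α-1)/2) := by
      rw [Real.sqrt_eq_rpow, ← Real.rpow_mul hhpos.le, ← Real.rpow_add hhpos]
      ring_nf
    have hdivpow : (φ h / Real.sqrt h) ^ α = φ h ^ α / Real.sqrt h ^ α :=
      Real.div_rpow hup.le (Real.sqrt_nonneg h) α
    rw [hdivpow, hsα]
    have huα : m * φ h ^ α = φ h ^ 2 - h := by linarith
    have husum : 0 < φ h + Real.sqrt h := by linarith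
    field_simp
    linear_combination (2) * huα +
      (2) * hs2
  · filter_upwards [hE] with h hh hc
    exfalso
    exact (Real.rpow_pos_of_pos hh.1 ((α-1)/2)).ne' hc
end

section
/- Let f satisfy the main assumption on B(0,r) ⊂ R^d. Then there exist C₀ > 0 and λ₀ ∈ N such that for all λ ≥ λ₀, if X₁,…,X_λ are i.i.d. uniform on B(0,r), then E[min_{1≤i≤λ} f(X_i)] ≤ C₀·λ^{−2/d}. -/
open MeasureTheory

/-- The uniform probability distribution on the closed Euclidean ball `B(0,r)` in `ℝ^d`. -/
noncomputable def unifBall (d : ℕ) (r : ℝ) : Measure (EuclideanSpace ℝ (Fin d)) :=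
  (volume (Metric.closedBall (0 : EuclideanSpace ℝ (Fin d)) r))⁻¹ •
    volume.restrict (Metric.closedBall (0 : EuclideanSpace ℝ (Fin d)) r)

open ProbabilityTheory

section Aux

lemma abs_coord_le_norm {d : ℕ} (y : EuclideanSpace ℝ (Fin d)) (i : Fin d) :
    |y i| ≤ ‖y‖ := by
  rw [EuclideanSpace.norm_eq, ← Real.sqrt_sq_eq_abs]
  apply Real.sqrt_le_sqrt
  have h := Finset.single_le_sum (f := fun j => ‖y j‖ ^ 2)
    (fun j _ => by positivity) (Finset.mem_univ i)
  simpa [Real.norm_eq_abs, sq_abs] using h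

lemma hquad_le_sum {d : ℕ} (H : Matrix (Fin d) (Fin d) ℝ) (y : EuclideanSpace ℝ (Fin d)) :
    Hquad H y ≤ (∑ i, ∑ j, |H i j|) * ‖y‖ ^ 2 := by
  rw [Hquad, dotProduct]
  calc ∑ i, (y : Fin d → ℝ) i * H.mulVec (y : Fin d → ℝ) i
      ≤ ∑ i, ∑ j, |H i j| * ‖y‖ ^ 2 := by
        apply Finset.sum_le_sum; intro i _
        rw [Matrix.mulVec, dotProduct, Finset.mul_sum]
        apply Finset.sum_le_sum; intro j _
        calc (y : Fin d → ℝ) i * (H i j * (y : Fin d → ℝ) j)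
            ≤ |(y : Fin d → ℝ) i * (H i j * (y : Fin d → ℝ) j)| := le_abs_self _
          _ = |H i j| * (|y i| * |y j|) := by rw [abs_mul, abs_mul]; ring
          _ ≤ |H i j| * (‖y‖ * ‖y‖) := by
              have h1 := abs_coord_le_norm y i
              have h2 := abs_coord_le_norm y j
              have := abs_nonneg (y i)
              have := abs_nonneg (y j)
              gcongr
          _ = |H i j| * ‖y‖ ^ 2 := by ring
    _ = (∑ i, ∑ j, |H i j|) * ‖y‖ ^ 2 := by rw [Finset.sum_mul]; simp [Finset.sum_mul]

lemma exp_neg_le_aux {x : ℝ} (hx : 0 < x) : Real.exp (-x) ≤ 6 / x ^ 3 := by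
  have h1 : x ^ 3 / 6 ≤ Real.exp x := by
    have hsum := Real.sum_le_exp_of_nonneg hx.le 4
    have hterm : x ^ 3 / (Nat.factorial 3 : ℝ) ≤ ∑ i ∈ Finset.range 4, x ^ i / (Nat.factorial i : ℝ) :=
      Finset.single_le_sum (f := fun i => x ^ i / (Nat.factorial i : ℝ))
        (fun i _ => by positivity) (by norm_num)
    refine le_trans ?_ hsum
    simpa [Nat.factorial] using hterm
  have h2 : 0 < x ^ 3 / 6 := by positivity
  rw [Real.exp_neg]
  calc (Real.exp x)⁻¹ ≤ (x ^ 3 / 6)⁻¹ := by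
        apply inv_anti₀ h2 h1
    _ = 6 / x ^ 3 := by rw [inv_div]

end Aux

set_option maxHeartbeats 1600000 in
/-- upper bound `E[min_i f(X_i)]` vs `λ^{-2/d}` for random search under
the main assumption, for i.i.d. uniform samples on `B(0,r)`. -/
theorem randomSearch_upper_bound
    {d : ℕ} (hd : 0 < d) {r : ℝ} {f : EuclideanSpace ℝ (Fin d) → ℝ}
    {xstar : EuclideanSpace ℝ (Fin d)} {H : Matrix (Fin d) (Fin d) ℝ}
    {α : ℝ} {ε : EuclideanSpace ℝ (Fin d) → ℝ} {M : ℝ}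
    (hf : Assump d r f xstar H α ε M) :
    ∃ C₀ > (0 : ℝ), ∃ lam₀ : ℕ, ∀ lam : ℕ, lam₀ ≤ lam →
      ∀ (Ω : Type) (mΩ : MeasurableSpace Ω) (P : Measure Ω),
        IsProbabilityMeasure P →
        ∀ X : Fin lam → Ω → EuclideanSpace ℝ (Fin d),
          (∀ i, Measurable (X i)) →
          iIndepFun X P →
          (∀ i, Measure.map (X i) P = unifBall d r) →
          (∫ ω, (⨅ i, f (X i ω)) ∂P) ≤ C₀ * (lam : ℝ) ^ (-(2 : ℝ) / d) := by
  classical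
  have hr0 : 0 < r := lt_of_le_of_lt (norm_nonneg xstar) hf.opt_int
  set cb : Set (EuclideanSpace ℝ (Fin d)) := Metric.closedBall (0 : EuclideanSpace ℝ (Fin d)) r with hcb_def
  -- the matrix-norm constant
  set S : ℝ := (∑ i, ∑ j, |H i j|) + 1 with hS_def
  have hS1 : 1 ≤ S := by
    have : (0:ℝ) ≤ ∑ i, ∑ j, |H i j| :=
      Finset.sum_nonneg fun i _ => Finset.sum_nonneg fun j _ => abs_nonneg _
    linarith
  have hSpos : 0 < S := lt_of_lt_of_le one_pos hS1
  have hsqrtS : 0 < Real.sqrt S := Real.sqrt_pos.mpr hSpos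
  have hquad_le : ∀ y : EuclideanSpace ℝ (Fin d), Hquad H y ≤ S * ‖y‖ ^ 2 := by
    intro y
    refine (hquad_le_sum H y).trans ?_
    have : (0:ℝ) ≤ ‖y‖ ^ 2 := by positivity
    nlinarith [this]
  have hquad_nonneg : ∀ y : EuclideanSpace ℝ (Fin d), 0 ≤ Hquad H y := by
    intro y
    have h := hf.posdef.posSemidef.re_dotProduct_nonneg (y : Fin d → ℝ)
    simpa [Hquad, dotProduct] using h
  -- quadratic upper bound for f near the optimum
  set K : ℝ := S * (1 + M) with hK_def
  have hKpos : 0 < K := mul_pos hSpos (by linarith [hf.M_pos])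
  have hfquad : ∀ x ∈ cb, ‖x - xstar‖ ≤ (Real.sqrt S)⁻¹ → f x ≤ K * ‖x - xstar‖ ^ 2 := by
    intro x hx hxn
    have hfeq := hf.feq x hx
    set h : ℝ := Hnorm H (x - xstar) with hh_def
    have hh0 : 0 ≤ h := Real.sqrt_nonneg _
    have hh_sq : h ^ 2 ≤ S * ‖x - xstar‖ ^ 2 := by
      rw [hh_def, Hnorm, Real.sq_sqrt (hquad_nonneg _)]
      exact hquad_le _
    have hh1 : h ≤ 1 := by
      have hsq1 : h ^ 2 ≤ 1 := by
        refine hh_sq.trans ?_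
        have h2 : ‖x - xstar‖ ^ 2 ≤ ((Real.sqrt S)⁻¹) ^ 2 :=
          pow_le_pow_left₀ (norm_nonneg _) hxn 2
        calc S * ‖x - xstar‖ ^ 2 ≤ S * ((Real.sqrt S)⁻¹) ^ 2 := by nlinarith
          _ = 1 := by
            rw [inv_pow, Real.sq_sqrt hSpos.le]
            field_simp
      nlinarith
    have hα2 : (2 : ℝ) ≤ α := le_of_lt hf.alpha_gt
    have hrpow : h ^ α ≤ h ^ 2 := by
      rcases eq_or_lt_of_le hh0 with h0 | h0
      · rw [← h0, Real.zero_rpow (by linarith : α ≠ 0)]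
        positivity
      · have hle := Real.rpow_le_rpow_of_exponent_ge h0 hh1 hα2
        calc h ^ α ≤ h ^ (2:ℝ) := hle
          _ = h ^ 2 := by
            rw [show ((2:ℝ) = ((2:ℕ):ℝ)) by norm_num, Real.rpow_natCast]
    have hεle : ε (x - xstar) ≤ M := (le_abs_self _).trans (hf.eps_bdd _)
    have hrnn : 0 ≤ h ^ α := Real.rpow_nonneg hh0 _
    have heps : h ^ α * ε (x - xstar) ≤ h ^ 2 * M := by
      calc h ^ α * ε (x - xstar) ≤ h ^ α * M := by
            exact mul_le_mul_of_nonneg_left hεle hrnn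
        _ ≤ h ^ 2 * M := by
            exact mul_le_mul_of_nonneg_right hrpow hf.M_pos.le
    rw [hfeq]
    have hsqnn : (0:ℝ) ≤ ‖x - xstar‖ ^ 2 := by positivity
    calc Hnorm H (x - xstar) ^ 2 + Hnorm H (x - xstar) ^ α * ε (x - xstar)
        = h ^ 2 + h ^ α * ε (x - xstar) := by rw [← hh_def]
      _ ≤ h ^ 2 + h ^ 2 * M := by linarith
      _ = h ^ 2 * (1 + M) := by ring
      _ ≤ (S * ‖x - xstar‖ ^ 2) * (1 + M) := by nlinarith [hf.M_pos]
      _ = K * ‖x - xstar‖ ^ 2 := by rw [hK_def]; ring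
  -- max of f on the ball
  obtain ⟨xm, hxm_mem, hxm_max⟩ := (isCompact_closedBall (0 : EuclideanSpace ℝ (Fin d)) r).exists_isMaxOn
    ⟨0, by simpa [cb] using hr0.le⟩ hf.cont
  set B : ℝ := max (f xm) 1 with hB_def
  have hB1 : 1 ≤ B := le_max_right _ _
  have hBpos : 0 < B := lt_of_lt_of_le one_pos hB1
  have hfB : ∀ x ∈ cb, f x ≤ B := fun x hx => le_trans (hxm_max hx : f x ≤ f xm) (le_max_left _ _)
  -- the measurable modification g of f
  set g : EuclideanSpace ℝ (Fin d) → ℝ := cb.piecewise f (fun _ => 0) with hg_def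
  have hgmeas : Measurable g :=
    ContinuousOn.measurable_piecewise hf.cont continuousOn_const measurableSet_closedBall
  have hg_eq : ∀ x ∈ cb, g x = f x := fun x hx => Set.piecewise_eq_of_mem _ _ _ hx
  have hf_nonneg : ∀ x ∈ cb, 0 ≤ f x := by
    intro x hx
    by_cases hxx : x = xstar
    · simp [hxx, hf.fopt]
    · exact (hf.fpos x hx hxx).le
  have hg_nonneg : ∀ x, 0 ≤ g x := by
    intro x
    by_cases hx : x ∈ cb
    · rw [hg_eq x hx]; exact hf_nonneg x hx
    · simp [hg_def, Set.piecewise_eq_of_notMem _ _ _ hx]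
  have hg_le : ∀ x, g x ≤ B := by
    intro x
    by_cases hx : x ∈ cb
    · rw [hg_eq x hx]; exact hfB x hx
    · have h0 : g x = 0 := by simp [hg_def, Set.piecewise_eq_of_notMem _ _ _ hx]
      rw [h0]; linarith
  -- radius at which the quadratic bound applies
  set δ₀ : ℝ := min (Real.sqrt S)⁻¹ (r - ‖xstar‖) with hδ₀_def
  have hδ₀pos : 0 < δ₀ := lt_min (by positivity) (by linarith [hf.opt_int])
  -- the uniform measure is a probability measure
  have hvol_pos : 0 < volume cb := by
    simpa [cb] using Metric.measure_closedBall_pos volume (0 : EuclideanSpace ℝ (Fin d)) hr0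
  have hvol_lt : volume cb < ⊤ := measure_closedBall_lt_top
  haveI hPM : IsProbabilityMeasure (unifBall d r) := by
    constructor
    rw [unifBall, Measure.smul_apply, Measure.restrict_apply_univ, smul_eq_mul]
    exact ENNReal.inv_mul_cancel hvol_pos.ne' hvol_lt.ne
  -- the key measure bound
  set q : ℝ → ℝ := fun t => (min (Real.sqrt (t / (2 * K))) δ₀ / r) ^ d with hq_def
  have hq_pos : ∀ t, 0 < t → 0 < q t := by
    intro t ht
    apply pow_pos
    apply div_pos (lt_min (Real.sqrt_pos.mpr (by positivity)) hδ₀pos) hr0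
  have hq_le_one : ∀ t, q t ≤ 1 := by
    intro t
    apply pow_le_one₀
    · apply div_nonneg (le_min (Real.sqrt_nonneg _) hδ₀pos.le) hr0.le
    · rw [div_le_one hr0]
      refine (min_le_right _ _).trans ?_
      refine (min_le_right _ _).trans ?_
      linarith [norm_nonneg xstar]
  have hmeas_bound : ∀ t, 0 < t →
      unifBall d r {x | t ≤ g x} ≤ ENNReal.ofReal (1 - q t) := by
    intro t ht
    set δt : ℝ := min (Real.sqrt (t / (2 * K))) δ₀ with hδt_def
    have hδt_pos : 0 < δt := lt_min (Real.sqrt_pos.mpr (by positivity)) hδ₀pos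
    set D : Set (EuclideanSpace ℝ (Fin d)) := Metric.closedBall xstar δt with hD_def
    have hDsub : D ⊆ cb := by
      rw [hD_def, hcb_def]
      apply Metric.closedBall_subset_closedBall'
      have h1 : δt ≤ r - ‖xstar‖ := (min_le_right _ _).trans (min_le_right _ _)
      have h2 : dist xstar (0 : EuclideanSpace ℝ (Fin d)) = ‖xstar‖ := by simp
      linarith
    have hDg : ∀ x ∈ D, g x < t := by
      intro x hxD
      have hx : x ∈ cb := hDsub hxD
      rw [hg_eq x hx]
      have hxn : ‖x - xstar‖ ≤ δt := by
        rw [← dist_eq_norm]; exact Metric.mem_closedBall.mp hxD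
      have hb1 : ‖x - xstar‖ ≤ (Real.sqrt S)⁻¹ :=
        hxn.trans ((min_le_right _ _).trans (min_le_left _ _))
      have hq2 := hfquad x hx hb1
      have h2 : ‖x - xstar‖ ^ 2 ≤ δt ^ 2 := pow_le_pow_left₀ (norm_nonneg _) hxn 2
      have h3 : δt ^ 2 ≤ t / (2 * K) := by
        have hmin : δt ≤ Real.sqrt (t / (2 * K)) := min_le_left _ _
        calc δt ^ 2 ≤ Real.sqrt (t / (2 * K)) ^ 2 := pow_le_pow_left₀ hδt_pos.le hmin 2
          _ = t / (2 * K) := Real.sq_sqrt (by positivity)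
      calc f x ≤ K * ‖x - xstar‖ ^ 2 := hq2
        _ ≤ K * (t / (2 * K)) := by nlinarith
        _ = t / 2 := by field_simp
        _ < t := by linarith
    have hsub : {x | t ≤ g x} ⊆ Dᶜ := fun x hx hxD => absurd (hDg x hxD) (not_lt.mpr hx)
    have hDmeas : MeasurableSet D := measurableSet_closedBall
    have hUD : unifBall d r D = ENNReal.ofReal (q t) := by
      rw [unifBall, Measure.smul_apply, Measure.restrict_apply hDmeas, smul_eq_mul]
      rw [Set.inter_eq_self_of_subset_left hDsub]
      have hvolD : volume D
          = ENNReal.ofReal (δt ^ d) * volume (Metric.ball (0:EuclideanSpace ℝ (Fin d)) 1) := by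
        rw [hD_def, Measure.addHaar_closedBall _ _ hδt_pos.le, finrank_euclideanSpace_fin]
      have hvolcb : volume cb
          = ENNReal.ofReal (r ^ d) * volume (Metric.ball (0:EuclideanSpace ℝ (Fin d)) 1) := by
        rw [hcb_def, Measure.addHaar_closedBall _ _ hr0.le, finrank_euclideanSpace_fin]
      set U := volume (Metric.ball (0:EuclideanSpace ℝ (Fin d)) 1) with hU
      have hU0 : U ≠ 0 := (Metric.measure_ball_pos volume _ one_pos).ne'
      have hUtop : U ≠ ⊤ := measure_ball_lt_top.ne
      have hr0' : ENNReal.ofReal (r ^ d) ≠ 0 := by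
        simp only [ne_eq, ENNReal.ofReal_eq_zero, not_le]
        positivity
      rw [hvolD, hvolcb]
      rw [ENNReal.mul_inv (Or.inl hr0') (Or.inl ENNReal.ofReal_ne_top)]
      calc (ENNReal.ofReal (r ^ d))⁻¹ * U⁻¹ * (ENNReal.ofReal (δt ^ d) * U)
          = (ENNReal.ofReal (r ^ d))⁻¹ * ENNReal.ofReal (δt ^ d) * (U⁻¹ * U) := by ring
        _ = (ENNReal.ofReal (r ^ d))⁻¹ * ENNReal.ofReal (δt ^ d) := by
            rw [ENNReal.inv_mul_cancel hU0 hUtop, mul_one]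
        _ = ENNReal.ofReal (δt ^ d) / ENNReal.ofReal (r ^ d) := by
            rw [ENNReal.div_eq_inv_mul]
        _ = ENNReal.ofReal (δt ^ d / r ^ d) := by
            rw [ENNReal.ofReal_div_of_pos (by positivity)]
        _ = ENNReal.ofReal (q t) := by
            show ENNReal.ofReal (δt ^ d / r ^ d) = ENNReal.ofReal ((δt / r) ^ d)
            rw [div_pow]
    calc unifBall d r {x | t ≤ g x} ≤ unifBall d r Dᶜ := measure_mono hsub
      _ = 1 - unifBall d r D := prob_compl_eq_one_sub hDmeas
      _ = 1 - ENNReal.ofReal (q t) := by rw [hUD]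
      _ = ENNReal.ofReal (1 - q t) := by
          rw [ENNReal.ofReal_sub 1 (hq_pos t ht).le, ENNReal.ofReal_one]
  -- lower bound on q on (0, B]
  set m : ℝ := min (Real.sqrt (1 / (2 * K))) (δ₀ / Real.sqrt B) with hm_def
  have hmpos : 0 < m := lt_min (Real.sqrt_pos.mpr (by positivity)) (div_pos hδ₀pos (Real.sqrt_pos.mpr hBpos))
  set c₂ : ℝ := (m / r) ^ d with hc₂_def
  have hc₂pos : 0 < c₂ := pow_pos (div_pos hmpos hr0) _
  have hq_lower : ∀ t, 0 < t → t ≤ B → c₂ * t ^ ((d:ℝ) / 2) ≤ q t := by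
    intro t ht htB
    have hst : 0 < Real.sqrt t := Real.sqrt_pos.mpr ht
    have hδt_ge : Real.sqrt t * m ≤ min (Real.sqrt (t / (2 * K))) δ₀ := by
      apply le_min
      · have : Real.sqrt (t / (2 * K)) = Real.sqrt t * Real.sqrt (1 / (2 * K)) := by
          rw [← Real.sqrt_mul ht.le]
          congr 1
          field_simp
        rw [this]
        exact mul_le_mul_of_nonneg_left (min_le_left _ _) hst.le
      · have h1 : Real.sqrt t ≤ Real.sqrt B := Real.sqrt_le_sqrt htB
        have h2 : m ≤ δ₀ / Real.sqrt B := min_le_right _ _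
        have hB' : 0 < Real.sqrt B := Real.sqrt_pos.mpr hBpos
        calc Real.sqrt t * m ≤ Real.sqrt B * (δ₀ / Real.sqrt B) := by
              apply mul_le_mul h1 h2 hmpos.le hB'.le
          _ = δ₀ := by field_simp
    have hsqd : Real.sqrt t ^ d = t ^ ((d:ℝ) / 2) := by
      rw [Real.sqrt_eq_rpow, ← Real.rpow_natCast (t ^ ((1:ℝ)/2)) d, ← Real.rpow_mul ht.le]
      congr 1
      ring
    rw [hq_def]
    have hkey : (Real.sqrt t * m / r) ^ d ≤ (min (Real.sqrt (t / (2 * K))) δ₀ / r) ^ d := by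
      refine pow_le_pow_left₀ (by positivity) ?_ d
      exact (div_le_div_iff_of_pos_right hr0).mpr hδt_ge
    refine le_trans (le_of_eq ?_) hkey
    rw [mul_div_assoc, mul_pow, hsqd, hc₂_def]
    ring
  -- the constants
  set pp : ℝ := 3 * d / 2 with hpp_def
  have hpp1 : 1 < pp := by
    rw [hpp_def]
    have : (1:ℝ) ≤ d := by exact_mod_cast hd
    nlinarith
  have hpp0 : 0 < pp := lt_trans one_pos hpp1
  set A : ℝ := 6 / c₂ ^ 3 with hA_def
  have hApos : 0 < A := div_pos (by norm_num) (pow_pos hc₂pos 3)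
  refine ⟨A ^ (1 / pp) * (1 + 1 / (pp - 1)),
    mul_pos (Real.rpow_pos_of_pos hApos _) (add_pos one_pos (one_div_pos.mpr (by linarith))), 1, ?_⟩
  intro lam hlam Ω mΩ P hP X hX hindep hmap
  have hlam0 : 0 < lam := hlam
  have hlamR : (1:ℝ) ≤ (lam:ℝ) := by exact_mod_cast hlam
  set Y : Ω → ℝ := fun ω => ⨅ i, g (X i ω) with hY_def
  set i₀ : Fin lam := ⟨0, hlam0⟩ with hi₀_def
  haveI : Nonempty (Fin lam) := ⟨i₀⟩
  have hbdd : ∀ ω, BddBelow (Set.range fun i => g (X i ω)) :=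
    fun ω => (Set.finite_range _).bddBelow
  have hY0 : ∀ ω, 0 ≤ Y ω := fun ω => le_ciInf fun i => hg_nonneg _
  have hYB : ∀ ω, Y ω ≤ B := fun ω => le_trans (ciInf_le (hbdd ω) i₀) (hg_le _)
  have hYmeas : Measurable Y := Measurable.iInf fun i => hgmeas.comp (hX i)
  have hYint : Integrable Y P := by
    refine (integrable_const B).mono' hYmeas.aestronglyMeasurable ?_
    refine Filter.Eventually.of_forall fun ω => ?_
    rw [Real.norm_eq_abs, abs_of_nonneg (hY0 ω)]
    exact hYB ω
  -- a.e. equality of the two infima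
  have hae_mem : ∀ᵐ ω ∂P, ∀ i, X i ω ∈ cb := by
    rw [ae_all_iff]
    intro i
    have h1 : P (X i ⁻¹' cbᶜ) = 0 := by
      have h2 : P (X i ⁻¹' cbᶜ) = unifBall d r cbᶜ := by
        rw [← hmap i, Measure.map_apply (hX i) measurableSet_closedBall.compl]
      rw [h2, prob_compl_eq_zero_iff measurableSet_closedBall]
      rw [unifBall, Measure.smul_apply, Measure.restrict_apply_self, smul_eq_mul]
      exact ENNReal.inv_mul_cancel hvol_pos.ne' hvol_lt.ne
    exact h1
  have hint_eq : ∫ ω, (⨅ i, f (X i ω)) ∂P = ∫ ω, Y ω ∂P := by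
    apply integral_congr_ae
    filter_upwards [hae_mem] with ω hω
    exact iInf_congr fun i => (hg_eq _ (hω i)).symm
  -- layer cake
  have hlayer : ∫ ω, Y ω ∂P
      = ∫ t in Set.Ioc 0 B, ((P {ω | t ≤ Y ω}).toReal) := by
    exact hYint.integral_eq_integral_Ioc_meas_le
      (Filter.Eventually.of_forall hY0) (Filter.Eventually.of_forall hYB)
  set F : ℝ → ℝ := fun t => (P {ω | t ≤ Y ω}).toReal with hF_def
  -- pointwise tail bound
  have htail : ∀ t, 0 < t → t ≤ B → F t ≤ A * (lam:ℝ) ^ (-(3:ℝ)) * t ^ (-pp) := by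
    intro t ht htB
    have hq1 := hq_pos t ht
    have hq2 := hq_le_one t
    have hql := hq_lower t ht htB
    have hT : MeasurableSet {x | t ≤ g x} := hgmeas measurableSet_Ici
    have hstep1 : P {ω | t ≤ Y ω} ≤ (unifBall d r {x | t ≤ g x}) ^ lam := by
      have hsub : {ω | t ≤ Y ω} ⊆ ⋂ i ∈ Finset.univ, X i ⁻¹' {x | t ≤ g x} := by
        intro ω hω
        simp only [Set.mem_iInter]
        intro i _
        exact le_trans hω (ciInf_le (hbdd ω) i)
      refine (measure_mono hsub).trans ?_
      rw [hindep.measure_inter_preimage_eq_mul Finset.univ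
        (sets := fun _ => {x | t ≤ g x}) (fun i _ => hT)]
      have heach : ∀ i : Fin lam, P (X i ⁻¹' {x | t ≤ g x}) = unifBall d r {x | t ≤ g x} :=
        fun i => by rw [← hmap i, Measure.map_apply (hX i) hT]
      rw [Finset.prod_congr rfl (fun i _ => heach i), Finset.prod_const,
        Finset.card_univ, Fintype.card_fin]
    have hnt : (unifBall d r {x | t ≤ g x}) ^ lam ≠ ⊤ :=
      ENNReal.pow_ne_top (measure_ne_top _ _)
    have hstep2 : F t ≤ ((unifBall d r {x | t ≤ g x}).toReal) ^ lam := by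
      have := ENNReal.toReal_mono hnt hstep1
      rwa [ENNReal.toReal_pow] at this
    have hstep3 : (unifBall d r {x | t ≤ g x}).toReal ≤ 1 - q t := by
      have h1 := ENNReal.toReal_mono ENNReal.ofReal_ne_top (hmeas_bound t ht)
      rwa [ENNReal.toReal_ofReal (by linarith)] at h1
    have hstep4 : F t ≤ (1 - q t) ^ lam := by
      refine hstep2.trans ?_
      exact pow_le_pow_left₀ ENNReal.toReal_nonneg hstep3 lam
    have hstep5 : (1 - q t) ^ lam ≤ Real.exp (-((lam:ℝ) * q t)) := by
      have h1 : 1 - q t ≤ Real.exp (-(q t)) := by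
        linarith [Real.add_one_le_exp (-(q t))]
      calc (1 - q t) ^ lam ≤ Real.exp (-(q t)) ^ lam :=
            pow_le_pow_left₀ (by linarith) h1 lam
        _ = Real.exp (-((lam:ℝ) * q t)) := by
            rw [← Real.exp_nat_mul]
            ring_nf
    set x₁ : ℝ := (lam:ℝ) * (c₂ * t ^ ((d:ℝ) / 2)) with hx₁_def
    have hx₁pos : 0 < x₁ := by
      apply mul_pos (by linarith)
      exact mul_pos hc₂pos (Real.rpow_pos_of_pos ht _)
    have hstep6 : Real.exp (-((lam:ℝ) * q t)) ≤ Real.exp (-x₁) := by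
      apply Real.exp_le_exp.mpr
      simp only [neg_le_neg_iff]
      exact mul_le_mul_of_nonneg_left hql (by linarith)
    have hstep7 : Real.exp (-x₁) ≤ 6 / x₁ ^ 3 := exp_neg_le_aux hx₁pos
    have hpow3 : (t ^ ((d:ℝ) / 2)) ^ (3:ℕ) = t ^ pp := by
      rw [← Real.rpow_natCast (t ^ ((d:ℝ)/2)) 3, ← Real.rpow_mul ht.le, hpp_def]
      congr 1
      push_cast
      ring
    have hx₁3 : x₁ ^ 3 = (lam:ℝ) ^ 3 * c₂ ^ 3 * t ^ pp := by
      rw [hx₁_def, mul_pow, mul_pow, hpow3]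
      ring
    have hrlam : (lam:ℝ) ^ (-(3:ℝ)) = ((lam:ℝ) ^ (3:ℕ))⁻¹ := by
      rw [Real.rpow_neg (by linarith : (0:ℝ) ≤ (lam:ℝ))]
      rw [← Real.rpow_natCast]; norm_num
    have hrt : t ^ (-pp) = (t ^ pp)⁻¹ := Real.rpow_neg ht.le pp
    have hfin : 6 / x₁ ^ 3 = A * (lam:ℝ) ^ (-(3:ℝ)) * t ^ (-pp) := by
      rw [hx₁3, hrlam, hrt, hA_def]
      ring
    calc F t ≤ Real.exp (-((lam:ℝ) * q t)) := hstep4.trans hstep5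
      _ ≤ Real.exp (-x₁) := hstep6
      _ ≤ 6 / x₁ ^ 3 := hstep7
      _ = A * (lam:ℝ) ^ (-(3:ℝ)) * t ^ (-pp) := hfin
  -- F basic properties
  have hF_anti : Antitone F := by
    intro s t hst
    apply ENNReal.toReal_mono (measure_ne_top P _)
    exact measure_mono fun ω hω => le_trans hst hω
  have hF_le_one : ∀ t, F t ≤ 1 := fun t => by
    simpa using ENNReal.toReal_mono ENNReal.one_ne_top prob_le_one
  have hF_nonneg : ∀ t, 0 ≤ F t := fun t => ENNReal.toReal_nonneg
  have hFint : IntegrableOn F (Set.Ioc 0 B) := by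
    refine Integrable.mono' (integrable_const 1) (hF_anti.measurable.aestronglyMeasurable) ?_
    refine Filter.Eventually.of_forall fun t => ?_
    rw [Real.norm_eq_abs, abs_of_nonneg (hF_nonneg t)]
    exact hF_le_one t
  -- the threshold s
  set s : ℝ := A ^ (1 / pp) * (lam:ℝ) ^ (-(2:ℝ) / d) with hs_def
  have hspos : 0 < s := by
    apply mul_pos (Real.rpow_pos_of_pos hApos _) (Real.rpow_pos_of_pos (by linarith) _)
  have hs_pow : s ^ pp = A * (lam:ℝ) ^ (-(3:ℝ)) := by
    have hlpos : (0:ℝ) < lam := by linarith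
    have hd' : (d:ℝ) ≠ 0 := Nat.cast_ne_zero.mpr hd.ne'
    rw [hs_def, Real.mul_rpow (Real.rpow_nonneg hApos.le _) (Real.rpow_nonneg hlpos.le _),
      ← Real.rpow_mul hApos.le, ← Real.rpow_mul hlpos.le]
    have h1 : 1 / pp * pp = 1 := by field_simp
    have h2 : -(2:ℝ) / d * pp = -3 := by
      rw [hpp_def]
      field_simp
    rw [h1, h2, Real.rpow_one]
  -- split the integral
  have hsplit : ∫ t in Set.Ioc 0 B, F t ≤ s + s / (pp - 1) := by
    have hA1 : Set.Ioc 0 B ∩ Set.Iic s ∪ Set.Ioc 0 B ∩ Set.Ioi s = Set.Ioc 0 B := by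
      rw [← Set.inter_union_distrib_left, Set.Iic_union_Ioi, Set.inter_univ]
    have hdisj : Disjoint (Set.Ioc 0 B ∩ Set.Iic s) (Set.Ioc 0 B ∩ Set.Ioi s) :=
      (Set.Iic_disjoint_Ioi le_rfl).mono Set.inter_subset_right Set.inter_subset_right
    have hmeas2 : MeasurableSet (Set.Ioc 0 B ∩ Set.Ioi s) :=
      measurableSet_Ioc.inter measurableSet_Ioi
    have hint1 : IntegrableOn F (Set.Ioc 0 B ∩ Set.Iic s) :=
      hFint.mono_set Set.inter_subset_left
    have hint2 : IntegrableOn F (Set.Ioc 0 B ∩ Set.Ioi s) :=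
      hFint.mono_set Set.inter_subset_left
    have heq : ∫ t in Set.Ioc 0 B, F t
        = (∫ t in Set.Ioc 0 B ∩ Set.Iic s, F t) + ∫ t in Set.Ioc 0 B ∩ Set.Ioi s, F t := by
      rw [← setIntegral_union hdisj hmeas2 hint1 hint2, hA1]
    rw [heq]
    have hvol1 : volume (Set.Ioc 0 B ∩ Set.Iic s) < ⊤ :=
      lt_of_le_of_lt (measure_mono Set.inter_subset_left) (by simp [Real.volume_Ioc])
    have hb1 : ∫ t in Set.Ioc 0 B ∩ Set.Iic s, F t ≤ s := by
      calc ∫ t in Set.Ioc 0 B ∩ Set.Iic s, F t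
          ≤ ∫ _t in Set.Ioc 0 B ∩ Set.Iic s, (1:ℝ) := by
            refine setIntegral_mono_on hint1 ((integrableOn_const_iff).mpr (Or.inr hvol1))
              (measurableSet_Ioc.inter measurableSet_Iic) (fun t _ => hF_le_one t)
        _ = (volume (Set.Ioc 0 B ∩ Set.Iic s)).toReal := by rw [setIntegral_const, smul_eq_mul, mul_one, measureReal_def]
        _ ≤ s := by
            have hsub2 : Set.Ioc 0 B ∩ Set.Iic s ⊆ Set.Ioc 0 s := fun x hx => ⟨hx.1.1, hx.2⟩
            have hmono := measure_mono (μ := volume) hsub2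
            have h2 : volume (Set.Ioc (0:ℝ) s) = ENNReal.ofReal s := by
              simp [Real.volume_Ioc]
            calc (volume (Set.Ioc 0 B ∩ Set.Iic s)).toReal
                ≤ (ENNReal.ofReal s).toReal := by
                  apply ENNReal.toReal_mono ENNReal.ofReal_ne_top (h2 ▸ hmono)
              _ = s := ENNReal.toReal_ofReal hspos.le
    have hintIoi : IntegrableOn (fun t => A * (lam:ℝ) ^ (-(3:ℝ)) * t ^ (-pp)) (Set.Ioi s) :=
      (integrableOn_Ioi_rpow_of_lt (by linarith) hspos).const_mul _
    have hb2 : ∫ t in Set.Ioc 0 B ∩ Set.Ioi s, F t ≤ s / (pp - 1) := by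
      have hc1 : ∫ t in Set.Ioc 0 B ∩ Set.Ioi s, F t
          ≤ ∫ t in Set.Ioc 0 B ∩ Set.Ioi s, A * (lam:ℝ) ^ (-(3:ℝ)) * t ^ (-pp) := by
        refine setIntegral_mono_on hint2 (hintIoi.mono_set Set.inter_subset_right) hmeas2 ?_
        intro t htmem
        exact htail t htmem.1.1 htmem.1.2
      have hc2 : ∫ t in Set.Ioc 0 B ∩ Set.Ioi s, A * (lam:ℝ) ^ (-(3:ℝ)) * t ^ (-pp)
          ≤ ∫ t in Set.Ioi s, A * (lam:ℝ) ^ (-(3:ℝ)) * t ^ (-pp) := by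
        refine setIntegral_mono_set hintIoi ?_ (HasSubset.Subset.eventuallyLE Set.inter_subset_right)
        filter_upwards [ae_restrict_mem measurableSet_Ioi] with t htt
        have htpos : 0 < t := lt_trans hspos htt
        have h1 : (0:ℝ) ≤ t ^ (-pp) := (Real.rpow_pos_of_pos htpos _).le
        have h2 : (0:ℝ) ≤ (lam:ℝ) ^ (-(3:ℝ)) := (Real.rpow_pos_of_pos (by linarith) _).le
        positivity
      have hc3 : ∫ t in Set.Ioi s, A * (lam:ℝ) ^ (-(3:ℝ)) * t ^ (-pp)
          = A * (lam:ℝ) ^ (-(3:ℝ)) * (-s ^ (-pp + 1) / (-pp + 1)) := by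
        rw [MeasureTheory.integral_const_mul, integral_Ioi_rpow_of_lt (by linarith) hspos]
      have hc4 : A * (lam:ℝ) ^ (-(3:ℝ)) * (-s ^ (-pp + 1) / (-pp + 1)) = s / (pp - 1) := by
        rw [← hs_pow]
        rw [show (-s ^ (-pp + 1) / (-pp + 1)) = s ^ (-pp + 1) / (pp - 1) by
          rw [div_eq_div_iff (by linarith) (by linarith)]; ring]
        rw [← mul_div_assoc, ← Real.rpow_add hspos]
        norm_num
      exact hc1.trans (hc2.trans (le_of_eq (hc3.trans hc4)))
    linarith
  rw [hint_eq, hlayer]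
  refine hsplit.trans (le_of_eq ?_)
  rw [hs_def]
  ring
end

section
/- Under the main assumption, vol(S_h) ∼ ω_d·h^{d/2}/√(det H) as h → 0⁺, where S_h = {x ∈ B(0,r) : f(x) ≤ h}. -/
open MeasureTheory

open Filter Set Topology
open scoped MatrixOrder

section aux
variable {d : ℕ} {H : Matrix (Fin d) (Fin d) ℝ}

/-- The linear map on Euclidean space given by a matrix. -/
noncomputable def matLin (A : Matrix (Fin d) (Fin d) ℝ) :
    EuclideanSpace ℝ (Fin d) →ₗ[ℝ] EuclideanSpace ℝ (Fin d) :=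
  (WithLp.linearEquiv 2 ℝ (Fin d → ℝ)).symm.toLinearMap ∘ₗ Matrix.toLin' A ∘ₗ
    (WithLp.linearEquiv 2 ℝ (Fin d → ℝ)).toLinearMap

lemma matLin_apply (A : Matrix (Fin d) (Fin d) ℝ) (y : EuclideanSpace ℝ (Fin d)) (i : Fin d) :
    matLin A y i = A.mulVec (fun j => y j) i := rfl

lemma det_matLin (A : Matrix (Fin d) (Fin d) ℝ) :
    LinearMap.det (matLin A) = A.det := by
  have h := LinearMap.det_conj (Matrix.toLin' A) (WithLp.linearEquiv 2 ℝ (Fin d → ℝ)).symm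
  rw [LinearEquiv.symm_symm] at h
  rw [matLin, h, LinearMap.det_toLin']

lemma matLin_comp (A B : Matrix (Fin d) (Fin d) ℝ) (y : EuclideanSpace ℝ (Fin d)) :
    matLin A (matLin B y) = matLin (A * B) y := by
  ext i
  simp only [matLin_apply]
  rw [← Matrix.mulVec_mulVec]

lemma matLin_one (y : EuclideanSpace ℝ (Fin d)) : matLin (1 : Matrix (Fin d) (Fin d) ℝ) y = y := by
  ext i
  simp [matLin_apply]

end aux

section aux2
variable {d : ℕ} {H : Matrix (Fin d) (Fin d) ℝ}

lemma hnorm_eq_norm (hH : H.PosDef) (y : EuclideanSpace ℝ (Fin d)) :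
    Hnorm H y = ‖matLin (CFC.sqrt H) y‖ := by
  have hsymm : (CFC.sqrt H).transpose = (CFC.sqrt H) := by
    have h2 := (Matrix.nonneg_iff_posSemidef.mp (CFC.sqrt_nonneg H)).1
    rwa [Matrix.IsHermitian, Matrix.conjTranspose_eq_transpose_of_trivial] at h2
  have hq : Hquad H y
      = dotProduct ((CFC.sqrt H).mulVec fun j => y j)
        ((CFC.sqrt H).mulVec fun j => y j) := by
    unfold Hquad
    conv_lhs => rw [← CFC.sqrt_mul_sqrt_self H (Matrix.PosSemidef.nonneg hH.posSemidef)]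
    rw [← Matrix.mulVec_mulVec, Matrix.dotProduct_mulVec]
    congr 1
    rw [← Matrix.mulVec_transpose, hsymm]
  rw [Hnorm, hq, EuclideanSpace.norm_eq]
  congr 1
  rw [dotProduct]
  congr 1
  ext i
  rw [matLin_apply]
  simp [Real.norm_eq_abs, sq_abs]
  ring
end aux2

section aux3
variable {d : ℕ} {H : Matrix (Fin d) (Fin d) ℝ}

lemma det_sqrt (hH : H.PosDef) : (CFC.sqrt H).det = Real.sqrt H.det := by
  have h1 : (CFC.sqrt H).det ^ 2 = H.det := by
    rw [sq, ← Matrix.det_mul, CFC.sqrt_mul_sqrt_self H (Matrix.PosSemidef.nonneg hH.posSemidef)]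
  have h2 : 0 ≤ (CFC.sqrt H).det := by
    rw [(Matrix.nonneg_iff_posSemidef.mp (CFC.sqrt_nonneg H)).1.det_eq_prod_eigenvalues]
    exact Finset.prod_nonneg fun i _ => Matrix.PosSemidef.eigenvalues_nonneg (Matrix.nonneg_iff_posSemidef.mp (CFC.sqrt_nonneg H)) i
  rw [← h1, Real.sqrt_sq h2]

lemma det_matLin_sqrt (hH : H.PosDef) :
    LinearMap.det (matLin (CFC.sqrt H)) = Real.sqrt H.det := by
  rw [det_matLin, det_sqrt hH]

lemma hnorm_continuous (hH : H.PosDef) : Continuous (Hnorm H) := by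
  have : Continuous (matLin (CFC.sqrt H)) := LinearMap.continuous_of_finiteDimensional _
  have h2 : Continuous fun y => ‖matLin (CFC.sqrt H) y‖ := this.norm
  exact h2.congr fun y => (hnorm_eq_norm hH y).symm

lemma hnorm_nonneg (H : Matrix (Fin d) (Fin d) ℝ) (y : EuclideanSpace ℝ (Fin d)) :
    0 ≤ Hnorm H y := Real.sqrt_nonneg _

lemma hnorm_zero (hH : H.PosDef) : Hnorm H (0 : EuclideanSpace ℝ (Fin d)) = 0 := by
  rw [hnorm_eq_norm hH, map_zero, norm_zero]

/-- Euclidean norm controlled by the `H`-norm. -/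
lemma exists_norm_le (hH : H.PosDef) :
    ∃ C : ℝ, 0 ≤ C ∧ ∀ y : EuclideanSpace ℝ (Fin d), ‖y‖ ≤ C * Hnorm H y := by
  set S := (CFC.sqrt H)
  have hdet : S.det ≠ 0 := by
    rw [det_sqrt hH]
    exact (Real.sqrt_pos.mpr hH.det_pos).ne'
  set T := LinearMap.toContinuousLinearMap (matLin S⁻¹)
  refine ⟨‖T‖, norm_nonneg _, fun y => ?_⟩
  have hy : T (matLin S y) = y := by
    show matLin S⁻¹ (matLin S y) = y
    rw [matLin_comp, Matrix.nonsing_inv_mul S hdet.isUnit, matLin_one]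
  calc ‖y‖ = ‖T (matLin S y)‖ := by rw [hy]
    _ ≤ ‖T‖ * ‖matLin S y‖ := T.le_opNorm _
    _ = ‖T‖ * Hnorm H y := by rw [hnorm_eq_norm hH]

/-- Volume of the `H`-ellipsoid. -/
lemma ellipsoid_volume (hH : H.PosDef) (t : ℝ) (ht : 0 ≤ t) :
    volume {y : EuclideanSpace ℝ (Fin d) | Hnorm H y ≤ t}
      = ENNReal.ofReal (t ^ d / Real.sqrt H.det) *
        volume (Metric.closedBall (0 : EuclideanSpace ℝ (Fin d)) 1) := by
  have hdet : LinearMap.det (matLin (CFC.sqrt H)) ≠ 0 := by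
    rw [det_matLin_sqrt hH]
    exact (Real.sqrt_pos.mpr hH.det_pos).ne'
  have hset : {y : EuclideanSpace ℝ (Fin d) | Hnorm H y ≤ t}
      = (matLin (CFC.sqrt H)) ⁻¹' Metric.closedBall 0 t := by
    ext y
    simp [Set.mem_preimage, mem_closedBall_zero_iff, hnorm_eq_norm hH]
  rw [hset, Measure.addHaar_preimage_linearMap volume hdet,
    Measure.addHaar_closedBall' volume (0 : EuclideanSpace ℝ (Fin d)) ht,
    det_matLin_sqrt hH, finrank_euclideanSpace_fin, ← mul_assoc, ← ENNReal.ofReal_mul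
      (by positivity)]
  congr 2
  rw [abs_of_nonneg (by positivity)]
  field_simp
end aux3

set_option maxHeartbeats 1000000 in
/-- under the main assumption,
`vol(S_h) ∼ ω_d h^{d/2} / √(det H)` as `h → 0⁺`, where
`S_h = {x ∈ B(0,r) : f x ≤ h}` and `ω_d = vol(B(0,1))`. -/
theorem sublevel_volume_asymptotics
    {d : ℕ} (hd : 0 < d) {r : ℝ} {f : EuclideanSpace ℝ (Fin d) → ℝ}
    {xstar : EuclideanSpace ℝ (Fin d)} {H : Matrix (Fin d) (Fin d) ℝ}
    {α : ℝ} {ε : EuclideanSpace ℝ (Fin d) → ℝ} {M : ℝ}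
    (hf : Assump d r f xstar H α ε M) :
    Tendsto (fun h : ℝ =>
        (volume {x : EuclideanSpace ℝ (Fin d) | x ∈ Metric.closedBall 0 r ∧ f x ≤ h}).toReal /
          ((volume (Metric.closedBall (0 : EuclideanSpace ℝ (Fin d)) 1)).toReal *
            h ^ ((d : ℝ) / 2) / Real.sqrt H.det))
      (nhdsWithin 0 (Ioi 0)) (nhds 1) := by
  obtain ⟨C, hC0, hC⟩ := exists_norm_le hf.posdef
  have qcont : Continuous (Hnorm H) := hnorm_continuous hf.posdef
  have qnn := hnorm_nonneg H
  have hdet : 0 < H.det := hf.posdef.det_pos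
  have hs : 0 < Real.sqrt H.det := Real.sqrt_pos.mpr hdet
  have hωfin : volume (Metric.closedBall (0 : EuclideanSpace ℝ (Fin d)) 1) ≠ ⊤ :=
    measure_closedBall_lt_top.ne
  have hωpos : 0 < (volume (Metric.closedBall (0 : EuclideanSpace ℝ (Fin d)) 1)).toReal :=
    ENNReal.toReal_pos (Metric.measure_closedBall_pos volume 0 one_pos).ne' hωfin
  have hrx : 0 < r - ‖xstar‖ := sub_pos.mpr hf.opt_int
  have hβ0 : 0 < α - 2 := by linarith [hf.alpha_gt]
  -- bounds on f in terms of the H-norm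
  have fbnd : ∀ x ∈ Metric.closedBall (0 : EuclideanSpace ℝ (Fin d)) r,
      Hnorm H (x - xstar) ^ 2 * (1 - M * Hnorm H (x - xstar) ^ (α - 2)) ≤ f x ∧
      f x ≤ Hnorm H (x - xstar) ^ 2 * (1 + M * Hnorm H (x - xstar) ^ (α - 2)) := by
    intro x hx
    have hfeq := hf.feq x hx
    set q := Hnorm H (x - xstar) with hq
    have hq0 : 0 ≤ q := qnn _
    have hα : q ^ α = q ^ 2 * q ^ (α - 2) := by
      have h2 : q ^ α = q ^ ((2:ℝ) + (α - 2)) := by norm_num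
      rw [h2, Real.rpow_add' hq0 (by linarith [hf.alpha_gt] : (2:ℝ) + (α - 2) ≠ 0)]
      norm_num
    have hqa : 0 ≤ q ^ (α - 2) := Real.rpow_nonneg hq0 _
    have heps := abs_le.mp (hf.eps_bdd (x - xstar))
    have hA : 0 ≤ q ^ 2 * q ^ (α - 2) := mul_nonneg (sq_nonneg q) hqa
    rw [hfeq, hα]
    constructor <;> nlinarith [mul_le_mul_of_nonneg_left heps.1 hA,
      mul_le_mul_of_nonneg_left heps.2 hA]
  -- volume of shifted ellipsoids
  have ellvol : ∀ t : ℝ, 0 ≤ t →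
      volume {x : EuclideanSpace ℝ (Fin d) | Hnorm H (x - xstar) ≤ t}
        = ENNReal.ofReal (t ^ d / Real.sqrt H.det) *
          volume (Metric.closedBall (0 : EuclideanSpace ℝ (Fin d)) 1) := by
    intro t ht
    have hset : {x : EuclideanSpace ℝ (Fin d) | Hnorm H (x - xstar) ≤ t}
        = (fun x : EuclideanSpace ℝ (Fin d) => x + (-xstar)) ⁻¹' {y | Hnorm H y ≤ t} := by
      ext x
      simp [sub_eq_add_neg]
    rw [hset, measure_preimage_add_right, ellipsoid_volume hf.posdef t ht]
  -- positive minimum away from the optimum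
  have farmin : ∀ δ : ℝ, 0 < δ → ∃ m, 0 < m ∧
      ∀ x ∈ Metric.closedBall (0 : EuclideanSpace ℝ (Fin d)) r,
        δ ≤ Hnorm H (x - xstar) → m ≤ f x := by
    intro δ hδ
    set K := Metric.closedBall (0 : EuclideanSpace ℝ (Fin d)) r ∩
      {x | δ ≤ Hnorm H (x - xstar)} with hK
    rcases K.eq_empty_or_nonempty with hKe | hKne
    · refine ⟨1, one_pos, fun x hx hqx => absurd ?_ (Set.notMem_empty x)⟩
      rw [← hKe]
      exact ⟨hx, hqx⟩
    · have hKc : IsCompact K := (isCompact_closedBall _ _).inter_right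
        (isClosed_le continuous_const (qcont.comp (continuous_id.sub continuous_const)))
      obtain ⟨z, hzK, hz⟩ := hKc.exists_isMinOn hKne (hf.cont.mono inter_subset_left)
      refine ⟨f z, ?_, fun x hx hqx => (isMinOn_iff.mp hz) x ⟨hx, hqx⟩⟩
      apply hf.fpos z hzK.1
      intro hzx
      have h2 := hzK.2
      rw [hzx] at h2
      simp only [Set.mem_setOf_eq, sub_self, hnorm_zero hf.posdef] at h2
      linarith
  -- key sandwich estimate
  have key : ∀ η : ℝ, 0 < η → η < 1 →
      ∀ᶠ h in 𝓝[>] (0:ℝ),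
        (1+η) ^ (-(d:ℝ)/2) *
            ((volume (Metric.closedBall (0 : EuclideanSpace ℝ (Fin d)) 1)).toReal *
              h ^ ((d : ℝ) / 2) / Real.sqrt H.det) ≤
          (volume {x : EuclideanSpace ℝ (Fin d) |
            x ∈ Metric.closedBall 0 r ∧ f x ≤ h}).toReal ∧
        (volume {x : EuclideanSpace ℝ (Fin d) |
            x ∈ Metric.closedBall 0 r ∧ f x ≤ h}).toReal ≤
          (1-η) ^ (-(d:ℝ)/2) *
            ((volume (Metric.closedBall (0 : EuclideanSpace ℝ (Fin d)) 1)).toReal *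
              h ^ ((d : ℝ) / 2) / Real.sqrt H.det) := by
    intro η hη0 hη1
    obtain ⟨δ, hδ0, hδη, hδr⟩ :
        ∃ δ : ℝ, 0 < δ ∧ M * δ ^ (α-2) ≤ η ∧ C * δ ≤ r - ‖xstar‖ := by
      refine ⟨min ((η / M) ^ (1/(α-2))) ((r - ‖xstar‖) / (C + 1)),
        lt_min (Real.rpow_pos_of_pos (div_pos hη0 hf.M_pos) _)
          (div_pos hrx (by linarith)), ?_, ?_⟩
      · have h1 : (min ((η / M) ^ (1/(α-2))) ((r - ‖xstar‖) / (C + 1))) ^ (α-2)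
            ≤ ((η/M) ^ (1/(α-2))) ^ (α-2) := by
          apply Real.rpow_le_rpow (le_of_lt (lt_min
            (Real.rpow_pos_of_pos (div_pos hη0 hf.M_pos) _)
            (div_pos hrx (by linarith)))) (min_le_left _ _) hβ0.le
        have h2 : ((η/M) ^ (1/(α-2))) ^ (α-2) = η / M := by
          rw [← Real.rpow_mul (div_pos hη0 hf.M_pos).le, one_div_mul_cancel hβ0.ne',
            Real.rpow_one]
        rw [h2] at h1
        calc M * (min ((η / M) ^ (1/(α-2))) ((r - ‖xstar‖) / (C + 1))) ^ (α-2)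
            ≤ M * (η / M) := mul_le_mul_of_nonneg_left h1 hf.M_pos.le
          _ = η := by rw [mul_comm, div_mul_cancel₀ η hf.M_pos.ne']
      · calc C * min ((η / M) ^ (1/(α-2))) ((r - ‖xstar‖) / (C + 1))
            ≤ C * ((r - ‖xstar‖) / (C + 1)) :=
              mul_le_mul_of_nonneg_left (min_le_right _ _) hC0
          _ ≤ (C + 1) * ((r - ‖xstar‖) / (C + 1)) :=
              mul_le_mul_of_nonneg_right (by linarith) (by positivity)
          _ = r - ‖xstar‖ := by field_simp
    obtain ⟨m, hm0, hmK⟩ := farmin δ hδ0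
    have h1η : (0:ℝ) < 1 + η := by linarith
    have h1η' : (0:ℝ) < 1 - η := by linarith
    filter_upwards [Ioo_mem_nhdsGT_of_mem
      (⟨le_refl (0:ℝ), lt_min (mul_pos (pow_pos hδ0 2) h1η') hm0⟩ : (0:ℝ) ∈ Ico 0 (min (δ^2*(1-η)) m))]
      with h hh
    obtain ⟨hh0, hhlt⟩ := hh
    have hhm : h < m := hhlt.trans_le (min_le_right _ _)
    have hhδ : h < δ^2*(1-η) := hhlt.trans_le (min_le_left _ _)
    set t₁ := Real.sqrt (h/(1+η)) with ht₁
    set t₂ := Real.sqrt (h/(1-η)) with ht₂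
    have ht₁0 : 0 ≤ t₁ := Real.sqrt_nonneg _
    have ht₂0 : 0 ≤ t₂ := Real.sqrt_nonneg _
    have ht₁sq : t₁^2 = h/(1+η) := Real.sq_sqrt (div_nonneg hh0.le h1η.le)
    have ht₂sq : t₂^2 = h/(1-η) := Real.sq_sqrt (div_nonneg hh0.le h1η'.le)
    have ht₁δ : t₁ ≤ δ := by
      rw [ht₁, show δ = Real.sqrt (δ^2) from (Real.sqrt_sq hδ0.le).symm]
      apply Real.sqrt_le_sqrt
      rw [div_le_iff₀ h1η]
      nlinarith
    -- inner inclusion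
    have hsub1 : {x : EuclideanSpace ℝ (Fin d) | Hnorm H (x - xstar) ≤ t₁}
        ⊆ {x : EuclideanSpace ℝ (Fin d) | x ∈ Metric.closedBall 0 r ∧ f x ≤ h} := by
      intro x hx
      have hq1 : Hnorm H (x - xstar) ≤ t₁ := hx
      have hqδ : Hnorm H (x - xstar) ≤ δ := hq1.trans ht₁δ
      have hq0 : 0 ≤ Hnorm H (x - xstar) := qnn _
      have hxb : x ∈ Metric.closedBall (0 : EuclideanSpace ℝ (Fin d)) r := by
        rw [Metric.mem_closedBall, dist_zero_right]
        calc ‖x‖ = ‖xstar + (x - xstar)‖ := by rw [show xstar + (x - xstar) = x from by abel]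
          _ ≤ ‖xstar‖ + ‖x - xstar‖ := norm_add_le _ _
          _ ≤ ‖xstar‖ + C * Hnorm H (x - xstar) := by linarith [hC (x - xstar)]
          _ ≤ ‖xstar‖ + C * δ := by nlinarith
          _ ≤ r := by linarith
      refine ⟨hxb, ?_⟩
      have hub := (fbnd x hxb).2
      have hqβ : M * Hnorm H (x - xstar) ^ (α-2) ≤ η :=
        le_trans (mul_le_mul_of_nonneg_left
          (Real.rpow_le_rpow hq0 hqδ hβ0.le) hf.M_pos.le) hδη
      have hq2 : Hnorm H (x - xstar) ^ 2 ≤ t₁ ^ 2 := by nlinarith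
      calc f x ≤ Hnorm H (x - xstar) ^ 2 * (1 + M * Hnorm H (x - xstar) ^ (α-2)) := hub
        _ ≤ t₁^2 * (1 + η) := by nlinarith [Real.rpow_nonneg hq0 (α-2), sq_nonneg (Hnorm H (x - xstar))]
        _ = h := by rw [ht₁sq]; field_simp
    -- outer inclusion
    have hsub2 : {x : EuclideanSpace ℝ (Fin d) | x ∈ Metric.closedBall 0 r ∧ f x ≤ h}
        ⊆ {x : EuclideanSpace ℝ (Fin d) | Hnorm H (x - xstar) ≤ t₂} := by
      rintro x ⟨hxb, hxf⟩
      by_cases hqδ : δ ≤ Hnorm H (x - xstar)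
      · exact absurd hxf (not_le.mpr (lt_of_lt_of_le hhm (hmK x hxb hqδ)))
      · push_neg at hqδ
        have hlb := (fbnd x hxb).1
        have hq0 : 0 ≤ Hnorm H (x - xstar) := qnn _
        have hqβ : M * Hnorm H (x - xstar) ^ (α-2) ≤ η :=
          le_trans (mul_le_mul_of_nonneg_left
            (Real.rpow_le_rpow hq0 hqδ.le hβ0.le) hf.M_pos.le) hδη
        have hq2 : Hnorm H (x - xstar) ^ 2 * (1-η) ≤ h := by
          nlinarith [sq_nonneg (Hnorm H (x - xstar))]
        show Hnorm H (x - xstar) ≤ t₂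
        rw [ht₂, Real.le_sqrt hq0 (by positivity)]
        rw [le_div_iff₀ h1η']
        linarith
    -- from inclusions to volume bounds
    have hVlow := measure_mono (μ := volume) hsub1
    have hVhigh := measure_mono (μ := volume) hsub2
    rw [ellvol t₁ ht₁0] at hVlow
    rw [ellvol t₂ ht₂0] at hVhigh
    have hfin2 : ENNReal.ofReal (t₂ ^ d / Real.sqrt H.det) *
        volume (Metric.closedBall (0 : EuclideanSpace ℝ (Fin d)) 1) ≠ ⊤ :=
      ENNReal.mul_ne_top ENNReal.ofReal_ne_top hωfin
    have hVfin : volume {x : EuclideanSpace ℝ (Fin d) |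
        x ∈ Metric.closedBall 0 r ∧ f x ≤ h} ≠ ⊤ :=
      (lt_of_le_of_lt hVhigh hfin2.lt_top).ne
    have low' : t₁ ^ d / Real.sqrt H.det *
        (volume (Metric.closedBall (0 : EuclideanSpace ℝ (Fin d)) 1)).toReal ≤
        (volume {x : EuclideanSpace ℝ (Fin d) |
          x ∈ Metric.closedBall 0 r ∧ f x ≤ h}).toReal := by
      have h2 := ENNReal.toReal_mono hVfin hVlow
      rwa [ENNReal.toReal_mul, ENNReal.toReal_ofReal (by positivity)] at h2
    have high' : (volume {x : EuclideanSpace ℝ (Fin d) |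
          x ∈ Metric.closedBall 0 r ∧ f x ≤ h}).toReal ≤
        t₂ ^ d / Real.sqrt H.det *
        (volume (Metric.closedBall (0 : EuclideanSpace ℝ (Fin d)) 1)).toReal := by
      have h2 := ENNReal.toReal_mono hfin2 hVhigh
      rwa [ENNReal.toReal_mul, ENNReal.toReal_ofReal (by positivity)] at h2
    have hpow : ∀ a : ℝ, 0 < a →
        (Real.sqrt (h/a)) ^ d = h ^ ((d:ℝ)/2) * a ^ (-(d:ℝ)/2) := by
      intro a ha
      have hha : (0:ℝ) ≤ h / a := by positivity
      calc (Real.sqrt (h/a)) ^ d = ((h/a) ^ ((1:ℝ)/2)) ^ d := by rw [Real.sqrt_eq_rpow]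
        _ = ((h/a) ^ ((1:ℝ)/2)) ^ ((d:ℕ):ℝ) := (Real.rpow_natCast _ d).symm
        _ = (h/a) ^ ((1:ℝ)/2 * d) := by rw [← Real.rpow_mul hha]
        _ = (h/a) ^ ((d:ℝ)/2) := by rw [show (1:ℝ)/2 * d = (d:ℝ)/2 from by ring]
        _ = h ^ ((d:ℝ)/2) / a ^ ((d:ℝ)/2) := Real.div_rpow hh0.le ha.le _
        _ = h ^ ((d:ℝ)/2) * a ^ (-(d:ℝ)/2) := by
            rw [show -(d:ℝ)/2 = -((d:ℝ)/2) from by ring, Real.rpow_neg ha.le, div_eq_mul_inv]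
    constructor
    · calc (1+η) ^ (-(d:ℝ)/2) *
            ((volume (Metric.closedBall (0 : EuclideanSpace ℝ (Fin d)) 1)).toReal *
              h ^ ((d : ℝ) / 2) / Real.sqrt H.det)
          = t₁ ^ d / Real.sqrt H.det *
            (volume (Metric.closedBall (0 : EuclideanSpace ℝ (Fin d)) 1)).toReal := by
            rw [ht₁, hpow (1+η) h1η]; ring
        _ ≤ _ := low'
    · calc (volume {x : EuclideanSpace ℝ (Fin d) |
            x ∈ Metric.closedBall 0 r ∧ f x ≤ h}).toReal
          ≤ t₂ ^ d / Real.sqrt H.det *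
            (volume (Metric.closedBall (0 : EuclideanSpace ℝ (Fin d)) 1)).toReal := high'
        _ = (1-η) ^ (-(d:ℝ)/2) *
            ((volume (Metric.closedBall (0 : EuclideanSpace ℝ (Fin d)) 1)).toReal *
              h ^ ((d : ℝ) / 2) / Real.sqrt H.det) := by
            rw [ht₂, hpow (1-η) h1η']; ring
  -- conclusion
  have cont1 : Tendsto (fun η : ℝ => (1+η) ^ (-(d:ℝ)/2)) (𝓝[>] (0:ℝ)) (𝓝 1) := by
    have h1 : ContinuousAt (fun x : ℝ => x ^ (-(d:ℝ)/2)) 1 :=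
      Real.continuousAt_rpow_const _ _ (Or.inl one_ne_zero)
    have h2 : Tendsto (fun η : ℝ => 1 + η) (𝓝[>] (0:ℝ)) (𝓝 1) := by
      have h3 : Continuous fun η : ℝ => 1 + η := by continuity
      have h4 : Tendsto (fun η : ℝ => 1 + η) (𝓝[>] (0:ℝ)) (𝓝 (1+0)) :=
        (h3.tendsto 0).mono_left nhdsWithin_le_nhds
      simpa using h4
    have h3 := h1.tendsto.comp h2
    rwa [Real.one_rpow] at h3
  have cont2 : Tendsto (fun η : ℝ => (1-η) ^ (-(d:ℝ)/2)) (𝓝[>] (0:ℝ)) (𝓝 1) := by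
    have h1 : ContinuousAt (fun x : ℝ => x ^ (-(d:ℝ)/2)) 1 :=
      Real.continuousAt_rpow_const _ _ (Or.inl one_ne_zero)
    have h2 : Tendsto (fun η : ℝ => 1 - η) (𝓝[>] (0:ℝ)) (𝓝 1) := by
      have h3 : Continuous fun η : ℝ => 1 - η := by continuity
      have h4 : Tendsto (fun η : ℝ => 1 - η) (𝓝[>] (0:ℝ)) (𝓝 (1-0)) :=
        (h3.tendsto 0).mono_left nhdsWithin_le_nhds
      simpa using h4
    have h3 := h1.tendsto.comp h2
    rwa [Real.one_rpow] at h3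
  rw [Metric.tendsto_nhds]
  intro ε' hε'
  have hev : ∀ᶠ η in 𝓝[>] (0:ℝ),
      (1 - ε' < (1+η) ^ (-(d:ℝ)/2) ∧ (1-η) ^ (-(d:ℝ)/2) < 1 + ε') ∧ (0 < η ∧ η < 1) := by
    apply Filter.Eventually.and
    · exact (cont1.eventually (eventually_gt_nhds (by linarith))).and
        (cont2.eventually (eventually_lt_nhds (by linarith)))
    · filter_upwards [Ioo_mem_nhdsGT_of_mem
        (⟨le_refl (0:ℝ), one_pos⟩ : (0:ℝ) ∈ Ico (0:ℝ) 1)] with η hη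
      exact ⟨hη.1, hη.2⟩
  obtain ⟨η, ⟨hb1, hb2⟩, hη0, hη1⟩ := hev.exists
  filter_upwards [key η hη0 hη1, self_mem_nhdsWithin] with h hkey hh0
  obtain ⟨hl, hu⟩ := hkey
  have hh0' : (0:ℝ) < h := hh0
  have hD : 0 < (volume (Metric.closedBall (0 : EuclideanSpace ℝ (Fin d)) 1)).toReal *
      h ^ ((d : ℝ) / 2) / Real.sqrt H.det :=
    div_pos (mul_pos hωpos (Real.rpow_pos_of_pos hh0' _)) hs
  rw [Real.dist_eq, abs_lt]
  constructor
  · have h2 := (le_div_iff₀ hD).mpr hl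
    linarith
  · have h2 := (div_le_iff₀ hD).mpr hu
    linarith
end
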